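/- arXiv:2102.09657 — 9 statements merged into one kernel-verified Lean document; each statement's English description precedes it below -/
import Mathlib

section
/- Let u ∈ L^p(ℝ^N) with 1 ≤ p < ∞ and λ > 0. Then the Lebesgue measure of the set {(x,y) ∈ ℝ^N × ℝ^N : x ≠ y, |u(x)-u(y)| ≥ λ |x-y|^{N/p}} is at most 2^{p+1} κ_N λ^{-p} ‖u‖_{L^p}^p, where κ_N is the volume of the unit ball in ℝ^N. -/
open MeasureTheory Metric Set Filter

/-! Since `|u x - u y| ≤ 2 max (|u x|, |u y|)`, the set is covered by
`{(x, y) | |x - y| ^ N ≤ (2 / λ) ^ p |u x| ^ p}` and its mirror image under `(x, y) ↦ (y, x)`.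
The slice of the first set over `x` is a closed ball of volume `κ_N (2 / λ) ^ p |u x| ^ p`,
so by Fubini each of the two sets has measure `κ_N (2 / λ) ^ p ‖u‖ₚ ^ p`. -/

theorem setOf_dist_rpow_le_eq_closedBall {X : Type*} [PseudoMetricSpace X] (x : X)
    {s c : ℝ} (hs : 0 < s) (hc : 0 ≤ c) :
    {y | dist x y ^ s ≤ c} = closedBall x (c ^ s⁻¹) := by
  ext y
  rw [mem_ofPred_eq, mem_closedBall, dist_comm y x, Real.le_rpow_inv_iff_of_pos dist_nonneg hc hs]

theorem rpow_le_or_rpow_le_of_mul_rpow_div_le_abs_sub {t s p lam a b : ℝ} (ht : 0 ≤ t)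
    (hp : 0 < p) (hlam : 0 < lam) (h : lam * t ^ (s / p) ≤ |a - b|) :
    t ^ s ≤ (2 / lam) ^ p * |a| ^ p ∨ t ^ s ≤ (2 / lam) ^ p * |b| ^ p := by
  have key : ∀ c, |a - b| ≤ 2 * |c| → t ^ s ≤ (2 / lam) ^ p * |c| ^ p := fun c hc => by
    rw [← Real.mul_rpow (by positivity) (abs_nonneg c), ← div_mul_cancel₀ s hp.ne',
      Real.rpow_mul ht]
    refine Real.rpow_le_rpow (Real.rpow_nonneg ht _) ?_ hp.le
    rw [div_mul_eq_mul_div, le_div_iff₀ hlam, mul_comm]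
    exact h.trans hc
  have htri := abs_sub a b
  rcases le_total |a| |b| with hab | hab
  · exact Or.inr (key b (by linarith))
  · exact Or.inl (key a (by linarith))

section AddHaar

variable {E : Type*} [NormedAddCommGroup E] [NormedSpace ℝ E] [FiniteDimensional ℝ E]
  [MeasurableSpace E] [BorelSpace E] (μ : Measure E) [μ.IsAddHaarMeasure]

theorem measure_prod_setOf_dist_rpow_le_fst (hE : Module.finrank ℝ E ≠ 0) {f : E → ℝ}
    (hf : Measurable f) (hf0 : 0 ≤ f) :
    μ.prod μ {q | dist q.1 q.2 ^ (Module.finrank ℝ E : ℝ) ≤ f q.1}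
      = (∫⁻ x, ENNReal.ofReal (f x) ∂μ) * μ (ball 0 1) := by
  have hd : (0 : ℝ) < Module.finrank ℝ E := by positivity
  have hm : MeasurableSet {q : E × E | dist q.1 q.2 ^ (Module.finrank ℝ E : ℝ) ≤ f q.1} :=
    measurableSet_le (by fun_prop) (by fun_prop)
  rw [Measure.prod_apply hm, ← lintegral_mul_const _ hf.ennreal_ofReal]
  congr with x
  rw [preimage_ofPred_eq, setOf_dist_rpow_le_eq_closedBall x hd (hf0 x),
    Measure.addHaar_closedBall _ _ (Real.rpow_nonneg (hf0 x) _), ← Real.rpow_natCast,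
    ← Real.rpow_mul (hf0 x), inv_mul_cancel₀ hd.ne', Real.rpow_one]

theorem measure_prod_setOf_dist_rpow_le_snd (hE : Module.finrank ℝ E ≠ 0) {f : E → ℝ}
    (hf : Measurable f) (hf0 : 0 ≤ f) :
    μ.prod μ {q | dist q.1 q.2 ^ (Module.finrank ℝ E : ℝ) ≤ f q.2}
      = (∫⁻ x, ENNReal.ofReal (f x) ∂μ) * μ (ball 0 1) := by
  have hswap : {q : E × E | dist q.1 q.2 ^ (Module.finrank ℝ E : ℝ) ≤ f q.2}
      = Prod.swap ⁻¹' {q | dist q.1 q.2 ^ (Module.finrank ℝ E : ℝ) ≤ f q.1} := by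
    ext q; simp [dist_comm]
  rw [hswap, (Measure.measurePreserving_swap).measure_preimage
    (measurableSet_le (by fun_prop) (by fun_prop)).nullMeasurableSet,
    measure_prod_setOf_dist_rpow_le_fst μ hE hf hf0]

theorem measure_prod_setOf_mul_dist_rpow_le_abs_sub_le (hE : Module.finrank ℝ E ≠ 0)
    {p lam : ℝ} (hp : 0 < p) (hlam : 0 < lam) {u : E → ℝ} (hu : Measurable u)
    (hint : Integrable (fun x => |u x| ^ p) μ) :
    μ.prod μ {q | lam * dist q.1 q.2 ^ ((Module.finrank ℝ E : ℝ) / p) ≤ |u q.1 - u q.2|}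
      ≤ 2 * ENNReal.ofReal ((2 / lam) ^ p * ∫ x, |u x| ^ p ∂μ) * μ (ball 0 1) := by
  set f : E → ℝ := fun x => (2 / lam) ^ p * |u x| ^ p
  have hf : Measurable f := by fun_prop
  have hf0 : 0 ≤ f := fun x => by positivity
  have hlint : ∫⁻ x, ENNReal.ofReal (f x) ∂μ
      = ENNReal.ofReal ((2 / lam) ^ p * ∫ x, |u x| ^ p ∂μ) := by
    rw [← integral_const_mul,
      ofReal_integral_eq_lintegral_ofReal (hint.const_mul _) (ae_of_all _ hf0)]
  calc _ ≤ μ.prod μ ({q | dist q.1 q.2 ^ (Module.finrank ℝ E : ℝ) ≤ f q.1}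
          ∪ {q | dist q.1 q.2 ^ (Module.finrank ℝ E : ℝ) ≤ f q.2}) :=
        measure_mono fun q h => rpow_le_or_rpow_le_of_mul_rpow_div_le_abs_sub dist_nonneg hp hlam h
    _ ≤ _ := measure_union_le _ _
    _ = _ := by
        rw [measure_prod_setOf_dist_rpow_le_fst μ hE hf hf0,
          measure_prod_setOf_dist_rpow_le_snd μ hE hf hf0, hlint, ← two_mul, mul_assoc]

end AddHaar

theorem stmt1 (N : ℕ) (hN : 1 ≤ N) (p : ℝ) (hp : 1 ≤ p)
    (u : EuclideanSpace ℝ (Fin N) → ℝ) (hu : Measurable u)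
    (hint : Integrable (fun x => |u x| ^ p)) (lam : ℝ) (hlam : 0 < lam) :
    volume {q : EuclideanSpace ℝ (Fin N) × EuclideanSpace ℝ (Fin N) |
        q.1 ≠ q.2 ∧ lam * dist q.1 q.2 ^ ((N : ℝ) / p) ≤ |u q.1 - u q.2|}
      ≤ ENNReal.ofReal ((2 : ℝ) ^ (p + 1) *
          (volume (ball (0 : EuclideanSpace ℝ (Fin N)) 1)).toReal *
          lam ^ (-p) * ∫ x, |u x| ^ p) := by
  have hfinrank : Module.finrank ℝ (EuclideanSpace ℝ (Fin N)) = N := finrank_euclideanSpace_fin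
  have hbound := measure_prod_setOf_mul_dist_rpow_le_abs_sub_le volume (by omega)
    (by linarith) hlam hu hint
  rw [hfinrank, ← Measure.volume_eq_prod] at hbound
  set I := ∫ x, |u x| ^ p
  set κ := (volume (ball (0 : EuclideanSpace ℝ (Fin N)) 1)).toReal
  have hI : 0 ≤ I := integral_nonneg fun x => by positivity
  have hconst : (2 : ℝ) ^ (p + 1) * κ * lam ^ (-p) * I = 2 * ((2 / lam) ^ p * I) * κ := by
    rw [Real.rpow_add two_pos, Real.rpow_one, Real.div_rpow zero_le_two hlam.le,
      Real.rpow_neg hlam.le]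
    ring
  calc _ ≤ _ := measure_mono fun q hq => hq.2
    _ ≤ _ := hbound
    _ = _ := by
        rw [hconst, ENNReal.ofReal_mul (p := 2 * ((2 / lam) ^ p * I)) (by positivity),
          ENNReal.ofReal_mul zero_le_two, ENNReal.ofReal_toReal measure_ball_lt_top.ne,
          ENNReal.ofReal_ofNat]
end

section
/- For u ∈ L^p(ℝ^N), 1 ≤ p < ∞, the weak-L^p quasi-norm of F(x,y) := (u(x)-u(y))/|x-y|^{N/p} on ℝ^N × ℝ^N satisfies [F]_{L^{p,∞}} ≤ 2 (2κ_N)^{1/p} ‖u‖_{L^p(ℝ^N)}, where [F]_{L^{p,∞}} = sup_{λ>0} (λ^p · |{(x,y) : |F(x,y)| ≥ λ}|)^{1/p}. -/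
open MeasureTheory Metric Set Filter

/-!
If `|u x - u y| ≥ λ |x - y| ^ (N / p)`, then `|u x|` or `|u y|` is at least half of
`λ |x - y| ^ (N / p)`, so the superlevel set lies in the union of
`{(x, y) | |x - y| ^ (N / p) ≤ 2 |u x| / λ}` and its reflection across the diagonal. The
`x`-slices of this set are balls of radius `(2 |u x| / λ) ^ (p / N)`, so by Fubini its measure is
`κ_N (2 / λ) ^ p ∫ |u| ^ p`, and the reflection has the same measure.
-/

theorem preimage_mk_setOf_dist_rpow_le {X : Type*} [PseudoMetricSpace X] {α : ℝ} (hα : 0 < α)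
    {g : X → ℝ} {x : X} (hgx : 0 ≤ g x) :
    Prod.mk x ⁻¹' {q : X × X | dist q.1 q.2 ^ α ≤ g q.1} = closedBall x (g x ^ α⁻¹) := by
  ext y
  rw [mem_preimage, mem_ofPred_eq, mem_closedBall, dist_comm y x,
    Real.le_rpow_inv_iff_of_pos dist_nonneg hgx hα]

section AddHaar

variable {E : Type*} [NormedAddCommGroup E] [NormedSpace ℝ E] [FiniteDimensional ℝ E]
  [MeasurableSpace E] [BorelSpace E] (μ : Measure E) [μ.IsAddHaarMeasure]

theorem prod_setOf_dist_rpow_le {α : ℝ} (hα : 0 < α) {g : E → ℝ} (hg : Measurable g)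
    (hg0 : ∀ x, 0 ≤ g x) :
    μ.prod μ {q : E × E | dist q.1 q.2 ^ α ≤ g q.1} =
      (∫⁻ x, ENNReal.ofReal (g x ^ (Module.finrank ℝ E / α)) ∂μ) * μ (ball 0 1) := by
  have hmeas : MeasurableSet {q : E × E | dist q.1 q.2 ^ α ≤ g q.1} :=
    measurableSet_le (by fun_prop) (hg.comp measurable_fst)
  rw [Measure.prod_apply hmeas, ← lintegral_mul_const _ (by fun_prop)]
  refine lintegral_congr fun x => ?_
  rw [preimage_mk_setOf_dist_rpow_le hα (hg0 x),
    Measure.addHaar_closedBall μ x (Real.rpow_nonneg (hg0 x) _), div_eq_inv_mul,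
    Real.rpow_mul_natCast (hg0 x)]

theorem prod_setOf_dist_rpow_finrank_div_le {p : ℝ} (hp : 0 < p) (hE : Module.finrank ℝ E ≠ 0)
    {f : E → ℝ} (hf : Measurable f) (hint : Integrable (fun x => |f x| ^ p) μ) {c : ℝ}
    (hc : 0 ≤ c) :
    μ.prod μ {q : E × E | dist q.1 q.2 ^ (Module.finrank ℝ E / p) ≤ c * |f q.1|} =
      ENNReal.ofReal (c ^ p * (∫ x, |f x| ^ p ∂μ) * (μ (ball 0 1)).toReal) := by
  rw [prod_setOf_dist_rpow_le μ (g := fun x => c * |f x|) (by positivity) (by fun_prop)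
      (fun x => by positivity),
    div_div_cancel₀ (by exact_mod_cast hE)]
  simp_rw [Real.mul_rpow hc (abs_nonneg _)]
  rw [← ofReal_integral_eq_lintegral_ofReal (hint.const_mul _)
      (.of_forall fun x => by positivity), integral_const_mul,
    ENNReal.ofReal_mul (by positivity : 0 ≤ c ^ p * ∫ x, |f x| ^ p ∂μ),
    ENNReal.ofReal_toReal measure_ball_lt_top.ne]

end AddHaar

theorem setOf_mul_dist_rpow_le_abs_sub_subset {X : Type*} [PseudoMetricSpace X] (f : X → ℝ)
    {lam : ℝ} (hlam : 0 < lam) (α : ℝ) :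
    {q : X × X | lam * dist q.1 q.2 ^ α ≤ |f q.1 - f q.2|} ⊆
      {q | dist q.1 q.2 ^ α ≤ 2 / lam * |f q.1|} ∪
        Prod.swap ⁻¹' {q | dist q.1 q.2 ^ α ≤ 2 / lam * |f q.1|} := by
  rintro ⟨x, y⟩ hxy
  simp only [mem_union, mem_preimage, mem_ofPred_eq, Prod.swap_prod_mk, dist_comm y x,
    div_mul_eq_mul_div, le_div_iff₀ hlam] at hxy ⊢
  have := abs_sub (f x) (f y)
  rcases le_total |f y| |f x| with h | h
  · left; linarith
  · right; linarith

theorem prod_union_preimage_swap_le {α : Type*} [MeasurableSpace α] (μ : Measure α) [SFinite μ]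
    (s : Set (α × α)) : μ.prod μ (s ∪ Prod.swap ⁻¹' s) ≤ 2 * μ.prod μ s :=
  calc μ.prod μ (s ∪ Prod.swap ⁻¹' s) ≤ μ.prod μ s + μ.prod μ (Prod.swap ⁻¹' s) :=
        measure_union_le _ _
    _ = 2 * μ.prod μ s := by
        rw [Measure.measurePreserving_swap.measure_preimage_emb
          MeasurableEquiv.prodComm.measurableEmbedding, two_mul]

theorem stmt2 (N : ℕ) (hN : 1 ≤ N) (p : ℝ) (hp : 1 ≤ p)
    (u : EuclideanSpace ℝ (Fin N) → ℝ) (hu : Measurable u)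
    (hint : Integrable (fun x => |u x| ^ p)) :
    (⨆ lam ∈ Set.Ioi (0 : ℝ),
        (ENNReal.ofReal (lam ^ p) *
          volume {q : EuclideanSpace ℝ (Fin N) × EuclideanSpace ℝ (Fin N) |
            q.1 ≠ q.2 ∧ lam * dist q.1 q.2 ^ ((N : ℝ) / p) ≤ |u q.1 - u q.2|}) ^ (1 / p))
      ≤ ENNReal.ofReal (2 *
          (2 * (volume (ball (0 : EuclideanSpace ℝ (Fin N)) 1)).toReal) ^ (1 / p) *
          (∫ x, |u x| ^ p) ^ (1 / p)) := by
  have hp0 : 0 < p := by linarith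
  set κ := (volume (ball (0 : EuclideanSpace ℝ (Fin N)) 1)).toReal
  set I := ∫ x, |u x| ^ p
  refine iSup₂_le fun lam (hlam : 0 < lam) => ?_
  have hfinrank : Module.finrank ℝ (EuclideanSpace ℝ (Fin N)) = N := finrank_euclideanSpace_fin
  have hS := prod_setOf_dist_rpow_finrank_div_le volume hp0 (by omega) hu hint
    (div_pos two_pos hlam).le
  rw [hfinrank, ← Measure.volume_eq_prod] at hS
  have hsuperlevel : volume {q : EuclideanSpace ℝ (Fin N) × EuclideanSpace ℝ (Fin N) |
      q.1 ≠ q.2 ∧ lam * dist q.1 q.2 ^ ((N : ℝ) / p) ≤ |u q.1 - u q.2|} ≤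
      2 * ENNReal.ofReal ((2 / lam) ^ p * I * κ) := by
    rw [← hS, Measure.volume_eq_prod]
    exact (measure_mono fun q hq => setOf_mul_dist_rpow_le_abs_sub_subset u hlam _ hq.2).trans
      (prod_union_preimage_swap_le volume _)
  calc _ ≤ (ENNReal.ofReal (lam ^ p) * (2 * ENNReal.ofReal ((2 / lam) ^ p * I * κ))) ^ (1 / p) :=
        by gcongr
    _ = ENNReal.ofReal (2 ^ p * (2 * κ * I)) ^ (1 / p) := by
        rw [← ENNReal.ofReal_ofNat 2, ← ENNReal.ofReal_mul (by positivity),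
          ← ENNReal.ofReal_mul (by positivity), Real.div_rpow (by positivity) hlam.le]
        congr 2
        field_simp
    _ = _ := by
        rw [ENNReal.ofReal_rpow_of_nonneg (by positivity) (by positivity),
          Real.mul_rpow (by positivity) (by positivity),
          Real.mul_rpow (by positivity) (by positivity),
          ← Real.rpow_mul (by positivity), mul_one_div_cancel hp0.ne', Real.rpow_one, mul_assoc]
end

section
/- Let u : ℝ^N → ℝ be measurable with support contained in the open ball B_R of radius R, and 1 ≤ p < ∞, λ > 0. For each x ∈ B_R, the set H_{λ,x} = {y : |y| > |x|, |u(y)-u(x)| ≥ λ|y-x|^{N/p}} satisfies κ_N |u(x)|^p/λ^p − κ_N R^N ≤ |H_{λ,x}| ≤ κ_N |u(x)|^p/λ^p + κ_N R^N, where |·| denotes N-dimensional Lebesgue measure and κ_N is the volume of the unit ball. -/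
open MeasureTheory Metric Set Filter

theorem stmt4 (N : ℕ) (hN : 1 ≤ N) (p : ℝ) (hp : 1 ≤ p) (R lam : ℝ)
    (hR : 0 < R) (hlam : 0 < lam)
    (u : EuclideanSpace ℝ (Fin N) → ℝ) (hu : Measurable u)
    (hsupp : ∀ y, R ≤ ‖y‖ → u y = 0)
    (x : EuclideanSpace ℝ (Fin N)) (hx : ‖x‖ < R) :
    ENNReal.ofReal ((volume (ball (0 : EuclideanSpace ℝ (Fin N)) 1)).toReal * |u x| ^ p / lam ^ p
        - (volume (ball (0 : EuclideanSpace ℝ (Fin N)) 1)).toReal * R ^ N)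
      ≤ volume {y : EuclideanSpace ℝ (Fin N) |
          ‖x‖ < ‖y‖ ∧ lam * dist y x ^ ((N : ℝ) / p) ≤ |u y - u x|} ∧
    volume {y : EuclideanSpace ℝ (Fin N) |
          ‖x‖ < ‖y‖ ∧ lam * dist y x ^ ((N : ℝ) / p) ≤ |u y - u x|}
      ≤ ENNReal.ofReal ((volume (ball (0 : EuclideanSpace ℝ (Fin N)) 1)).toReal * |u x| ^ p / lam ^ p
          + (volume (ball (0 : EuclideanSpace ℝ (Fin N)) 1)).toReal * R ^ N) := by
  set κ := volume (ball (0 : EuclideanSpace ℝ (Fin N)) 1) with hκ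
  have hκtop : κ ≠ ⊤ := measure_ball_lt_top.ne
  set c := κ.toReal with hc
  have hc0 : 0 ≤ c := ENNReal.toReal_nonneg
  have hκc : κ = ENNReal.ofReal c := (ENNReal.ofReal_toReal hκtop).symm
  set a := |u x| with ha
  have ha0 : 0 ≤ a := abs_nonneg _
  have hN0 : (0:ℝ) < (N:ℝ) := by exact_mod_cast hN
  have hp0 : (0:ℝ) < p := by linarith
  have he0 : (0:ℝ) < (N:ℝ) / p := div_pos hN0 hp0
  set r : ℝ := (a / lam) ^ (p / (N:ℝ)) with hrdef
  have hdiv0 : 0 ≤ a / lam := by positivity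
  have hr0 : 0 ≤ r := Real.rpow_nonneg hdiv0 _
  have hrNp : r ^ ((N:ℝ)/p) = a / lam := by
    rw [hrdef, ← Real.rpow_mul hdiv0]
    have : p / (N:ℝ) * ((N:ℝ)/p) = 1 := by field_simp
    rw [this, Real.rpow_one]
  have hrN : r ^ N = a ^ p / lam ^ p := by
    have h1 : p / (N:ℝ) * (N:ℝ) = p := by field_simp
    rw [hrdef, ← Real.rpow_natCast _ N, ← Real.rpow_mul hdiv0, h1,
        Real.div_rpow ha0 hlam.le]
  set H := {y : EuclideanSpace ℝ (Fin N) |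
      ‖x‖ < ‖y‖ ∧ lam * dist y x ^ ((N : ℝ) / p) ≤ |u y - u x|} with hH
  have hfr : Module.finrank ℝ (EuclideanSpace ℝ (Fin N)) = N :=
    finrank_euclideanSpace_fin
  have hcb : volume (closedBall x r) = ENNReal.ofReal (r ^ N) * κ := by
    rw [Measure.addHaar_closedBall volume x hr0, hfr]
  haveI : Nontrivial (EuclideanSpace ℝ (Fin N)) :=
    Module.nontrivial_of_finrank_pos (R := ℝ) (by rw [hfr]; omega)
  have hbR : volume (ball (0 : EuclideanSpace ℝ (Fin N)) R)
      = ENNReal.ofReal (R ^ N) * κ := by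
    rw [Measure.addHaar_ball volume _ hR.le, hfr]
  -- upper bound inclusion
  have hsub : H ⊆ closedBall x r ∪ ball (0 : EuclideanSpace ℝ (Fin N)) R := by
    intro y hy
    obtain ⟨hy1, hy2⟩ := hy
    by_cases hyR : ‖y‖ < R
    · right; simpa [mem_ball, dist_eq_norm] using hyR
    · left
      push_neg at hyR
      rw [hsupp y hyR] at hy2
      have hy2' : dist y x ^ ((N:ℝ)/p) ≤ a / lam := by
        rw [zero_sub, abs_neg, ← ha] at hy2
        rw [le_div_iff₀ hlam]
        linarith [hy2]
      rw [← hrNp] at hy2'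
      rw [mem_closedBall]
      by_contra hlt
      push_neg at hlt
      have := Real.rpow_lt_rpow hr0 hlt he0
      linarith
  -- lower bound inclusion
  have hsub2 : closedBall x r \ ball (0 : EuclideanSpace ℝ (Fin N)) R ⊆ H := by
    intro y hy
    obtain ⟨hy1, hy2⟩ := hy
    have hyR : R ≤ ‖y‖ := by
      simp only [mem_ball, dist_eq_norm, sub_zero, not_lt] at hy2
      simpa using hy2
    constructor
    · linarith
    · rw [hsupp y hyR, zero_sub, abs_neg, ← ha]
      have hd : dist y x ≤ r := mem_closedBall.1 hy1
      have := Real.rpow_le_rpow dist_nonneg hd he0.le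
      rw [hrNp] at this
      calc lam * dist y x ^ ((N:ℝ)/p) ≤ lam * (a / lam) := by
            exact mul_le_mul_of_nonneg_left this hlam.le
        _ = a := by field_simp
  constructor
  · -- lower bound
    calc ENNReal.ofReal (c * a ^ p / lam ^ p - c * R ^ N)
        = ENNReal.ofReal (r ^ N * c) - ENNReal.ofReal (R ^ N * c) := by
          rw [← ENNReal.ofReal_sub _ (by positivity)]
          congr 1
          rw [hrN]; ring
      _ = volume (closedBall x r) - volume (ball (0 : EuclideanSpace ℝ (Fin N)) R) := by
          rw [hcb, hbR, hκc, ← ENNReal.ofReal_mul (by positivity),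
            ← ENNReal.ofReal_mul (by positivity)]
      _ ≤ volume (closedBall x r \ ball (0 : EuclideanSpace ℝ (Fin N)) R) :=
          le_measure_diff
      _ ≤ volume H := measure_mono hsub2
  · -- upper bound
    calc volume H ≤ volume (closedBall x r ∪ ball (0 : EuclideanSpace ℝ (Fin N)) R) :=
          measure_mono hsub
      _ ≤ volume (closedBall x r) + volume (ball (0 : EuclideanSpace ℝ (Fin N)) R) :=
          measure_union_le _ _
      _ = ENNReal.ofReal (r ^ N * c + R ^ N * c) := by
          rw [hcb, hbR, hκc, ← ENNReal.ofReal_mul (by positivity),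
            ← ENNReal.ofReal_mul (by positivity),
            ← ENNReal.ofReal_add (by positivity) (by positivity)]
      _ = ENNReal.ofReal (c * a ^ p / lam ^ p + c * R ^ N) := by
          congr 1
          rw [hrN]; ring
end

section
/- Let u ∈ L^p(ℝ^N), 1 ≤ p < ∞, with u supported in a ball of radius R. Then for H_λ = {(x,y) : x ≠ y, |y| > |x|, |u(x)-u(y)| ≥ λ|x-y|^{N/p}}, one has κ_N λ^{-p}‖u‖_{L^p}^p − κ_N² R^{2N} ≤ |H_λ| ≤ κ_N λ^{-p}‖u‖_{L^p}^p + κ_N² R^{2N} for every λ > 0, where |·| is 2N-dimensional Lebesgue measure. -/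
open MeasureTheory Metric Set Filter

theorem stmt5 (N : ℕ) (hN : 1 ≤ N) (p : ℝ) (hp : 1 ≤ p) (R : ℝ) (hR : 0 < R)
    (u : EuclideanSpace ℝ (Fin N) → ℝ) (hu : Measurable u)
    (hint : Integrable (fun x => |u x| ^ p))
    (hsupp : ∀ y, R ≤ ‖y‖ → u y = 0)
    (lam : ℝ) (hlam : 0 < lam) :
    ENNReal.ofReal ((volume (ball (0 : EuclideanSpace ℝ (Fin N)) 1)).toReal * lam ^ (-p) *
          (∫ x, |u x| ^ p)
        - (volume (ball (0 : EuclideanSpace ℝ (Fin N)) 1)).toReal ^ 2 * R ^ (2 * N))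
      ≤ volume {q : EuclideanSpace ℝ (Fin N) × EuclideanSpace ℝ (Fin N) |
          q.1 ≠ q.2 ∧ ‖q.1‖ < ‖q.2‖ ∧ lam * dist q.1 q.2 ^ ((N : ℝ) / p) ≤ |u q.1 - u q.2|} ∧
    volume {q : EuclideanSpace ℝ (Fin N) × EuclideanSpace ℝ (Fin N) |
          q.1 ≠ q.2 ∧ ‖q.1‖ < ‖q.2‖ ∧ lam * dist q.1 q.2 ^ ((N : ℝ) / p) ≤ |u q.1 - u q.2|}
      ≤ ENNReal.ofReal ((volume (ball (0 : EuclideanSpace ℝ (Fin N)) 1)).toReal * lam ^ (-p) *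
            (∫ x, |u x| ^ p)
          + (volume (ball (0 : EuclideanSpace ℝ (Fin N)) 1)).toReal ^ 2 * R ^ (2 * N)) := by
  classical
  have hN0 : (0:ℝ) < N := by exact_mod_cast Nat.lt_of_lt_of_le Nat.zero_lt_one hN
  have hp0 : (0:ℝ) < p := lt_of_lt_of_le one_pos hp
  set κ : ENNReal := volume (ball (0 : (EuclideanSpace ℝ (Fin N))) 1) with hκdef
  have hκtop : κ ≠ ⊤ := measure_ball_lt_top.ne
  set H := {q : (EuclideanSpace ℝ (Fin N)) × (EuclideanSpace ℝ (Fin N)) |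
      q.1 ≠ q.2 ∧ ‖q.1‖ < ‖q.2‖ ∧ lam * dist q.1 q.2 ^ ((N : ℝ) / p) ≤ |u q.1 - u q.2|}
    with hHdef
  -- radius function
  set r : (EuclideanSpace ℝ (Fin N)) → ℝ := fun x => (|u x| / lam) ^ (p / (N:ℝ)) with hrdef
  have hrnn : ∀ x, 0 ≤ r x := fun x =>
    Real.rpow_nonneg (div_nonneg (abs_nonneg _) hlam.le) _
  have hc1 : (N:ℝ)/p * (p/(N:ℝ)) = 1 := by field_simp
  have hc2 : p/(N:ℝ) * ((N:ℝ)/p) = 1 := by field_simp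
  -- the key pointwise equivalence
  have key : ∀ x : (EuclideanSpace ℝ (Fin N)), ∀ d : ℝ, 0 ≤ d →
      (lam * d ^ ((N:ℝ)/p) ≤ |u x| ↔ d ≤ r x) := by
    intro x d hd
    have h1 : lam * d ^ ((N:ℝ)/p) ≤ |u x| ↔ d ^ ((N:ℝ)/p) ≤ |u x| / lam := by
      rw [le_div_iff₀ hlam, mul_comm]
    rw [h1]
    constructor
    · intro h
      have := Real.rpow_le_rpow (Real.rpow_nonneg hd _) h
        (le_of_lt (div_pos hp0 hN0))
      rwa [← Real.rpow_mul hd, hc1, Real.rpow_one] at this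
    · intro h
      have := Real.rpow_le_rpow hd h (le_of_lt (div_pos hN0 hp0))
      rwa [hrdef, ← Real.rpow_mul (div_nonneg (abs_nonneg _) hlam.le), hc2,
        Real.rpow_one] at this
  -- slices
  have slice_empty : ∀ x : (EuclideanSpace ℝ (Fin N)), R ≤ ‖x‖ → Prod.mk x ⁻¹' H = ∅ := by
    intro x hx
    ext y
    simp only [mem_preimage, hHdef, mem_setOf_eq, mem_empty_iff_false, iff_false]
    rintro ⟨hne, hlt, hle⟩
    have hy : u y = 0 := hsupp y (hx.trans hlt.le)
    have hx0 : u x = 0 := hsupp x hx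
    rw [hx0, hy, sub_zero, abs_zero] at hle
    have hd : 0 < dist x y := dist_pos.mpr hne
    have : 0 < lam * dist x y ^ ((N:ℝ)/p) :=
      mul_pos hlam (Real.rpow_pos_of_pos hd _)
    linarith
  have slice_sub : ∀ x : (EuclideanSpace ℝ (Fin N)), Prod.mk x ⁻¹' H \ ball (0:(EuclideanSpace ℝ (Fin N))) R ⊆ closedBall x (r x) := by
    intro x y hy
    obtain ⟨hyH, hyb⟩ := hy
    obtain ⟨hne, hlt, hle⟩ := hyH
    have hyR : R ≤ ‖y‖ := by
      simpa [mem_ball_zero_iff, not_lt] using hyb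
    have hy0 : u y = 0 := hsupp y hyR
    rw [hy0, sub_zero] at hle
    exact mem_closedBall'.mpr ((key x (dist x y) dist_nonneg).mp hle)
  have slice_sup : ∀ x : (EuclideanSpace ℝ (Fin N)), ‖x‖ < R →
      closedBall x (r x) \ ball (0:(EuclideanSpace ℝ (Fin N))) R ⊆ Prod.mk x ⁻¹' H := by
    intro x hx y hy
    obtain ⟨hyc, hyb⟩ := hy
    have hyR : R ≤ ‖y‖ := by
      simpa [mem_ball_zero_iff, not_lt] using hyb
    have hy0 : u y = 0 := hsupp y hyR
    have hlt : ‖x‖ < ‖y‖ := hx.trans_le hyR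
    refine ⟨fun h => absurd (congrArg norm h) (ne_of_lt hlt), hlt, ?_⟩
    rw [hy0, sub_zero]
    exact (key x (dist x y) dist_nonneg).mpr (mem_closedBall'.mp hyc)
  -- measurability of H
  have hmeas3 : Measurable fun q : (EuclideanSpace ℝ (Fin N)) × (EuclideanSpace ℝ (Fin N)) => |u q.1 - u q.2| :=
    ((hu.comp measurable_fst).sub (hu.comp measurable_snd)).abs
  have hmeasd : Measurable fun q : (EuclideanSpace ℝ (Fin N)) × (EuclideanSpace ℝ (Fin N)) => lam * dist q.1 q.2 ^ ((N:ℝ)/p) := by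
    have hcont : Continuous fun q : (EuclideanSpace ℝ (Fin N)) × (EuclideanSpace ℝ (Fin N)) => lam * dist q.1 q.2 ^ ((N:ℝ)/p) :=
      continuous_const.mul
        ((Real.continuous_rpow_const (le_of_lt (div_pos hN0 hp0))).comp continuous_dist)
    exact hcont.measurable
  have hHm : MeasurableSet H := by
    have h1 : MeasurableSet {q : (EuclideanSpace ℝ (Fin N)) × (EuclideanSpace ℝ (Fin N)) | q.1 ≠ q.2} :=
      (isClosed_eq continuous_fst continuous_snd).measurableSet.compl
    have h2 : MeasurableSet {q : (EuclideanSpace ℝ (Fin N)) × (EuclideanSpace ℝ (Fin N)) | ‖q.1‖ < ‖q.2‖} :=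
      (isOpen_lt (continuous_norm.comp continuous_fst)
        (continuous_norm.comp continuous_snd)).measurableSet
    have h3 : MeasurableSet {q : (EuclideanSpace ℝ (Fin N)) × (EuclideanSpace ℝ (Fin N)) |
        lam * dist q.1 q.2 ^ ((N:ℝ)/p) ≤ |u q.1 - u q.2|} :=
      measurableSet_le hmeasd hmeas3
    exact (h1.inter (h2.inter h3))
  -- product formula
  have volH : volume H = ∫⁻ x, volume (Prod.mk x ⁻¹' H) := by
    rw [Measure.volume_eq_prod, Measure.prod_apply hHm]
  -- measure of balls
  have hfr : Module.finrank ℝ (EuclideanSpace ℝ (Fin N)) = N := finrank_euclideanSpace_fin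
  have vol_cb : ∀ x : (EuclideanSpace ℝ (Fin N)), volume (closedBall x (r x)) =
      ENNReal.ofReal (|u x| ^ p * lam ^ (-p)) * κ := by
    intro x
    rw [Measure.addHaar_closedBall _ _ (hrnn x), hfr, hκdef]
    congr 2
    rw [hrdef]
    rw [← Real.rpow_natCast ((|u x| / lam) ^ (p / (N:ℝ))) N,
      ← Real.rpow_mul (div_nonneg (abs_nonneg _) hlam.le),
      div_mul_cancel₀ _ (ne_of_gt hN0),
      Real.div_rpow (abs_nonneg _) hlam.le, Real.rpow_neg hlam.le, div_eq_mul_inv]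
  haveI : Nontrivial (EuclideanSpace ℝ (Fin N)) :=
    Module.nontrivial_of_finrank_pos (R := ℝ) (by rw [hfr]; exact Nat.lt_of_lt_of_le Nat.zero_lt_one hN)
  have vol_b : volume (ball (0:(EuclideanSpace ℝ (Fin N))) R) = ENNReal.ofReal (R ^ N) * κ := by
    rw [Measure.addHaar_ball _ _ hR.le, hfr]
  -- aux functions
  set a : (EuclideanSpace ℝ (Fin N)) → ENNReal := fun x => ENNReal.ofReal (|u x| ^ p * lam ^ (-p)) * κ with hadef
  set c : ENNReal := ENNReal.ofReal (R ^ N) * κ with hcdef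
  have hm0 : Measurable fun x : (EuclideanSpace ℝ (Fin N)) => ENNReal.ofReal (|u x| ^ p) :=
    ((Real.continuous_rpow_const hp0.le).measurable.comp hu.abs).ennreal_ofReal
  have ha_meas : Measurable a := by
    have h1 : Measurable fun x : (EuclideanSpace ℝ (Fin N)) => |u x| ^ p :=
      (Real.continuous_rpow_const hp0.le).measurable.comp hu.abs
    exact ((h1.mul_const _).ennreal_ofReal).mul_const _
  have ha_zero : ∀ x : (EuclideanSpace ℝ (Fin N)), x ∉ ball (0:(EuclideanSpace ℝ (Fin N))) R → a x = 0 := by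
    intro x hx
    have hxR : R ≤ ‖x‖ := by simpa [mem_ball_zero_iff, not_lt] using hx
    have : u x = 0 := hsupp x hxR
    simp [hadef, this, Real.zero_rpow (ne_of_gt hp0)]
  -- pointwise bounds on the slice measure
  have upper_pt : ∀ x : (EuclideanSpace ℝ (Fin N)), volume (Prod.mk x ⁻¹' H) ≤
      a x + (ball (0:(EuclideanSpace ℝ (Fin N))) R).indicator (fun _ => c) x := by
    intro x
    by_cases hx : x ∈ ball (0:(EuclideanSpace ℝ (Fin N))) R
    · have hsub : Prod.mk x ⁻¹' H ⊆ closedBall x (r x) ∪ ball (0:(EuclideanSpace ℝ (Fin N))) R := by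
        intro y hy
        by_cases hyb : y ∈ ball (0:(EuclideanSpace ℝ (Fin N))) R
        · exact Or.inr hyb
        · exact Or.inl (slice_sub x ⟨hy, hyb⟩)
      calc volume (Prod.mk x ⁻¹' H) ≤ volume (closedBall x (r x) ∪ ball (0:(EuclideanSpace ℝ (Fin N))) R) :=
            measure_mono hsub
        _ ≤ volume (closedBall x (r x)) + volume (ball (0:(EuclideanSpace ℝ (Fin N))) R) := measure_union_le _ _
        _ = a x + (ball (0:(EuclideanSpace ℝ (Fin N))) R).indicator (fun _ => c) x := by
            rw [vol_cb, vol_b, indicator_of_mem hx]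
    · have hxR : R ≤ ‖x‖ := by simpa [mem_ball_zero_iff, not_lt] using hx
      rw [slice_empty x hxR]
      simp
  have lower_pt : ∀ x : (EuclideanSpace ℝ (Fin N)), (ball (0:(EuclideanSpace ℝ (Fin N))) R).indicator (fun x => a x - c) x ≤
      volume (Prod.mk x ⁻¹' H) := by
    intro x
    by_cases hx : x ∈ ball (0:(EuclideanSpace ℝ (Fin N))) R
    · rw [indicator_of_mem hx]
      have hxR : ‖x‖ < R := mem_ball_zero_iff.mp hx
      have h1 : volume (closedBall x (r x) \ ball (0:(EuclideanSpace ℝ (Fin N))) R) ≤ volume (Prod.mk x ⁻¹' H) :=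
        measure_mono (slice_sup x hxR)
      have h2 : a x - c ≤ volume (closedBall x (r x) \ ball (0:(EuclideanSpace ℝ (Fin N))) R) := by
        simp only [hadef]
        rw [← vol_cb x, ← vol_b]
        have h3 : volume (closedBall x (r x)) ≤
            volume (closedBall x (r x) \ ball (0:(EuclideanSpace ℝ (Fin N))) R) + volume (ball (0:(EuclideanSpace ℝ (Fin N))) R) := by
          refine le_trans (measure_mono ?_) (measure_union_le _ _)
          intro y hy
          by_cases hyb : y ∈ ball (0:(EuclideanSpace ℝ (Fin N))) R
          · exact Or.inr hyb
          · exact Or.inl ⟨hy, hyb⟩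
        exact tsub_le_iff_right.mpr h3
      exact h2.trans h1
    · rw [indicator_of_notMem hx]
      exact zero_le
  -- integral computations
  have hI_nonneg : 0 ≤ ∫ x, |u x| ^ p :=
    integral_nonneg fun x => Real.rpow_nonneg (abs_nonneg _) _
  have hL : ENNReal.ofReal (∫ x, |u x| ^ p) = ∫⁻ x, ENNReal.ofReal (|u x| ^ p) :=
    ofReal_integral_eq_lintegral_ofReal hint
      (Filter.Eventually.of_forall fun x => Real.rpow_nonneg (abs_nonneg _) _)
  have hIa : ∫⁻ x, a x = κ * ENNReal.ofReal (lam ^ (-p)) *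
      ENNReal.ofReal (∫ x, |u x| ^ p) := by
    rw [hL]
    have : ∀ x : (EuclideanSpace ℝ (Fin N)), a x = ENNReal.ofReal (|u x| ^ p) * (ENNReal.ofReal (lam ^ (-p)) * κ) := by
      intro x
      simp only [hadef]
      rw [ENNReal.ofReal_mul (Real.rpow_nonneg (abs_nonneg _) _)]
      ring
    simp only [this]
    rw [lintegral_mul_const _ hm0]
    ring
  have hIc : ∫⁻ x, (ball (0:(EuclideanSpace ℝ (Fin N))) R).indicator (fun _ => c) x =
      κ ^ 2 * ENNReal.ofReal (R ^ (2 * N)) := by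
    rw [lintegral_indicator measurableSet_ball _, setLIntegral_const, vol_b, hcdef]
    have : (2 : ℕ) * N = N + N := two_mul N
    rw [this, pow_add, ENNReal.ofReal_mul (pow_nonneg hR.le N)]
    ring
  -- conversions for the target
  have hofReal_main : ENNReal.ofReal (κ.toReal * lam ^ (-p) * (∫ x, |u x| ^ p)) =
      κ * ENNReal.ofReal (lam ^ (-p)) * ENNReal.ofReal (∫ x, |u x| ^ p) := by
    rw [ENNReal.ofReal_mul (mul_nonneg ENNReal.toReal_nonneg
      (Real.rpow_nonneg hlam.le _)), ENNReal.ofReal_mul ENNReal.toReal_nonneg,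
      ENNReal.ofReal_toReal hκtop]
  have hofReal_err : ENNReal.ofReal (κ.toReal ^ 2 * R ^ (2 * N)) =
      κ ^ 2 * ENNReal.ofReal (R ^ (2 * N)) := by
    rw [ENNReal.ofReal_mul (pow_nonneg ENNReal.toReal_nonneg 2),
      ENNReal.ofReal_pow ENNReal.toReal_nonneg, ENNReal.ofReal_toReal hκtop]
  constructor
  · -- lower bound
    rw [ENNReal.ofReal_sub _ (mul_nonneg (pow_nonneg ENNReal.toReal_nonneg 2)
      (pow_nonneg hR.le _)), hofReal_main, hofReal_err, volH]
    have step1 : ∫⁻ x, a x ≤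
        (∫⁻ x, (ball (0:(EuclideanSpace ℝ (Fin N))) R).indicator (fun x => a x - c) x) +
          κ ^ 2 * ENNReal.ofReal (R ^ (2 * N)) := by
      rw [← hIc]
      rw [← lintegral_add_right _ (measurable_const.indicator measurableSet_ball)]
      refine lintegral_mono fun x => ?_
      by_cases hx : x ∈ ball (0:(EuclideanSpace ℝ (Fin N))) R
      · rw [indicator_of_mem hx, indicator_of_mem hx]
        exact le_tsub_add
      · rw [indicator_of_notMem hx, indicator_of_notMem hx, ha_zero x hx]
        simp
    calc κ * ENNReal.ofReal (lam ^ (-p)) * ENNReal.ofReal (∫ x, |u x| ^ p) -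
          κ ^ 2 * ENNReal.ofReal (R ^ (2 * N))
        = (∫⁻ x, a x) - κ ^ 2 * ENNReal.ofReal (R ^ (2 * N)) := by rw [hIa]
      _ ≤ ∫⁻ x, (ball (0:(EuclideanSpace ℝ (Fin N))) R).indicator (fun x => a x - c) x :=
          tsub_le_iff_right.mpr step1
      _ ≤ ∫⁻ x, volume (Prod.mk x ⁻¹' H) := lintegral_mono lower_pt
  · -- upper bound
    rw [ENNReal.ofReal_add (mul_nonneg (mul_nonneg ENNReal.toReal_nonneg
        (Real.rpow_nonneg hlam.le _)) hI_nonneg)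
      (mul_nonneg (pow_nonneg ENNReal.toReal_nonneg 2) (pow_nonneg hR.le _)),
      hofReal_main, hofReal_err, volH]
    calc (∫⁻ x, volume (Prod.mk x ⁻¹' H))
        ≤ ∫⁻ x, (a x + (ball (0:(EuclideanSpace ℝ (Fin N))) R).indicator (fun _ => c) x) :=
          lintegral_mono upper_pt
      _ = (∫⁻ x, a x) + ∫⁻ x, (ball (0:(EuclideanSpace ℝ (Fin N))) R).indicator (fun _ => c) x :=
          lintegral_add_left ha_meas _
      _ = κ * ENNReal.ofReal (lam ^ (-p)) * ENNReal.ofReal (∫ x, |u x| ^ p) +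
          κ ^ 2 * ENNReal.ofReal (R ^ (2 * N)) := by rw [hIa, hIc]
end

section
/- Let u ∈ L^p(ℝ^N), 1 ≤ p < ∞, be compactly supported. Then lim_{λ→0⁺} λ^p · |E_λ| = 2κ_N ‖u‖_{L^p(ℝ^N)}^p, where E_λ = {(x,y) ∈ ℝ^N × ℝ^N : x ≠ y, |u(x)-u(y)| ≥ λ|x-y|^{N/p}} and |·| denotes 2N-dimensional Lebesgue measure. -/
open MeasureTheory Metric Set Filter
open scoped ENNReal

theorem stmt6 (N : ℕ) (hN : 1 ≤ N) (p : ℝ) (hp : 1 ≤ p)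
    (u : EuclideanSpace ℝ (Fin N) → ℝ) (hu : Measurable u)
    (hint : Integrable (fun x => |u x| ^ p))
    (hcs : HasCompactSupport u) :
    Tendsto (fun lam : ℝ => ENNReal.ofReal (lam ^ p) *
        volume {q : EuclideanSpace ℝ (Fin N) × EuclideanSpace ℝ (Fin N) |
          q.1 ≠ q.2 ∧ lam * dist q.1 q.2 ^ ((N : ℝ) / p) ≤ |u q.1 - u q.2|})
      (nhdsWithin 0 (Set.Ioi 0))
      (nhds (ENNReal.ofReal (2 * (volume (ball (0 : EuclideanSpace ℝ (Fin N)) 1)).toReal *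
        ∫ x, |u x| ^ p))) := by
  classical
  have hp0 : (0:ℝ) < p := lt_of_lt_of_le one_pos hp
  have hN0 : (0:ℝ) < (N:ℝ) := by exact_mod_cast Nat.lt_of_lt_of_le Nat.zero_lt_one hN
  set K : Set (EuclideanSpace ℝ (Fin N)) := tsupport u with hKdef
  have hKc : IsCompact K := hcs
  have hKm : MeasurableSet K := (isClosed_tsupport u).measurableSet
  set c : ℝ≥0∞ := volume K with hcdef
  have hcfin : c ≠ ⊤ := hKc.measure_lt_top.ne
  set κ : ℝ≥0∞ := volume (ball (0 : EuclideanSpace ℝ (Fin N)) 1) with hκdef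
  have hκfin : κ ≠ ⊤ := measure_ball_lt_top.ne
  set I : ℝ := ∫ x, |u x| ^ p with hIdef
  have hI0 : 0 ≤ I := integral_nonneg fun x => Real.rpow_nonneg (abs_nonneg _) p
  have humeas : Measurable fun x : EuclideanSpace ℝ (Fin N) => ENNReal.ofReal (|u x| ^ p) :=
    (hu.abs.pow measurable_const).ennreal_ofReal
  have hJ : ∫⁻ x, ENNReal.ofReal (|u x| ^ p) = ENNReal.ofReal I :=
    (ofReal_integral_eq_lintegral_ofReal hint
      (Eventually.of_forall fun x => Real.rpow_nonneg (abs_nonneg _) p)).symm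
  -- the set in question
  set A : ℝ → Set (EuclideanSpace ℝ (Fin N) × EuclideanSpace ℝ (Fin N)) := fun lam =>
    {q : EuclideanSpace ℝ (Fin N) × EuclideanSpace ℝ (Fin N) |
      q.1 ≠ q.2 ∧ lam * dist q.1 q.2 ^ ((N : ℝ) / p) ≤ |u q.1 - u q.2|} with hAdef
  set L : ℝ≥0∞ := ENNReal.ofReal I * κ with hLdef
  have hLfin : L ≠ ⊤ := ENNReal.mul_ne_top ENNReal.ofReal_ne_top hκfin
  have key : ∀ lam : ℝ, 0 < lam →
      ENNReal.ofReal (lam ^ p) * volume (A lam) ≤ 2 * L + ENNReal.ofReal (lam ^ p) * (c * c) ∧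
      2 * L ≤ ENNReal.ofReal (lam ^ p) * volume (A lam) +
        2 * (ENNReal.ofReal (lam ^ p) * (c * c)) := by
    intro lam hlam
    have hlp : 0 < lam ^ p := Real.rpow_pos_of_pos hlam p
    have h0 : ENNReal.ofReal (lam ^ p) ≠ 0 := (ENNReal.ofReal_pos.mpr hlp).ne'
    have htop : ENNReal.ofReal (lam ^ p) ≠ ⊤ := ENNReal.ofReal_ne_top
    set r : EuclideanSpace ℝ (Fin N) → ℝ := fun x => (|u x| / lam) ^ (p / (N:ℝ)) with hrdef
    have hr0 : ∀ x, 0 ≤ r x := fun x =>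
      Real.rpow_nonneg (div_nonneg (abs_nonneg _) hlam.le) _
    have hslice : ∀ x : EuclideanSpace ℝ (Fin N),
        {y : EuclideanSpace ℝ (Fin N) | lam * dist x y ^ ((N:ℝ)/p) ≤ |u x|}
        = closedBall x (r x) := by
      intro x
      ext y
      simp only [mem_setOf_eq, mem_closedBall]
      rw [dist_comm y x, mul_comm, ← le_div_iff₀ hlam]
      have h1 : r x = (|u x| / lam) ^ ((N:ℝ)/p)⁻¹ := by
        rw [hrdef]; norm_num [inv_div]
      rw [h1, Real.le_rpow_inv_iff_of_pos dist_nonneg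
        (div_nonneg (abs_nonneg _) hlam.le) (div_pos hN0 hp0)]
    have hball : ∀ x : EuclideanSpace ℝ (Fin N), volume (closedBall x (r x))
        = ENNReal.ofReal (|u x| ^ p) * (ENNReal.ofReal (lam ^ p))⁻¹ * κ := by
      intro x
      rw [Measure.addHaar_closedBall volume x (hr0 x), finrank_euclideanSpace_fin]
      congr 1
      have h2 : (r x) ^ N = |u x| ^ p / lam ^ p := by
        rw [hrdef, ← Real.rpow_natCast ((|u x| / lam) ^ (p / (N:ℝ))) N,
          ← Real.rpow_mul (div_nonneg (abs_nonneg _) hlam.le),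
          div_mul_cancel₀ _ hN0.ne', Real.div_rpow (abs_nonneg _) hlam.le]
      rw [h2, ENNReal.ofReal_div_of_pos hlp, div_eq_mul_inv]
    -- the basic one-sided set
    set T : Set (EuclideanSpace ℝ (Fin N) × EuclideanSpace ℝ (Fin N)) :=
      {q : EuclideanSpace ℝ (Fin N) × EuclideanSpace ℝ (Fin N) |
        lam * dist q.1 q.2 ^ ((N:ℝ)/p) ≤ |u q.1|} with hTdef
    have hTmeas : MeasurableSet T := by
      apply measurableSet_le
      · exact measurable_const.mul (continuous_dist.measurable.pow measurable_const)
      · exact (hu.comp measurable_fst).abs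
    have hTslice : ∀ x : EuclideanSpace ℝ (Fin N), Prod.mk x ⁻¹' T = closedBall x (r x) := by
      intro x
      rw [← hslice x]
      rfl
    have hTvol : volume T = ENNReal.ofReal I * (ENNReal.ofReal (lam ^ p))⁻¹ * κ := by
      rw [Measure.volume_eq_prod, Measure.prod_apply hTmeas]
      calc ∫⁻ x, volume (Prod.mk x ⁻¹' T)
          = ∫⁻ x, ENNReal.ofReal (|u x| ^ p) * ((ENNReal.ofReal (lam ^ p))⁻¹ * κ) := by
            refine lintegral_congr fun x => ?_
            rw [hTslice x, hball x, mul_assoc]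
        _ = (∫⁻ x, ENNReal.ofReal (|u x| ^ p)) * ((ENNReal.ofReal (lam ^ p))⁻¹ * κ) :=
            lintegral_mul_const _ humeas
        _ = ENNReal.ofReal I * (ENNReal.ofReal (lam ^ p))⁻¹ * κ := by
            rw [hJ, mul_assoc]
    have hTmul : ENNReal.ofReal (lam ^ p) * volume T = L := by
      rw [hTvol, hLdef]
      rw [show ENNReal.ofReal I * (ENNReal.ofReal (lam ^ p))⁻¹ * κ
          = (ENNReal.ofReal (lam ^ p))⁻¹ * (ENNReal.ofReal I * κ) by ring,
        ← mul_assoc, ENNReal.mul_inv_cancel h0 htop, one_mul]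
    have hswapT : volume (Prod.swap ⁻¹' T :
        Set (EuclideanSpace ℝ (Fin N) × EuclideanSpace ℝ (Fin N))) = volume T := by
      rw [Measure.volume_eq_prod]
      exact Measure.measurePreserving_swap.measure_preimage hTmeas.nullMeasurableSet
    -- Upper bound
    have hup : ENNReal.ofReal (lam ^ p) * volume (A lam)
        ≤ 2 * L + ENNReal.ofReal (lam ^ p) * (c * c) := by
      have hsub : A lam ⊆ (T ∪ Prod.swap ⁻¹' T) ∪ K ×ˢ K := by
        rintro ⟨x, y⟩ ⟨hxy, hle⟩
        by_cases hx : x ∈ K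
        · by_cases hy : y ∈ K
          · exact Or.inr ⟨hx, hy⟩
          · left; left
            have h3 : u y = 0 := image_eq_zero_of_notMem_tsupport hy
            simp only [hTdef, mem_setOf_eq]
            simpa [h3] using hle
        · left; right
          have h3 : u x = 0 := image_eq_zero_of_notMem_tsupport hx
          simp only [hTdef, mem_preimage, Prod.swap_prod_mk, mem_setOf_eq]
          rw [dist_comm]
          calc lam * dist x y ^ ((N:ℝ)/p) ≤ |u x - u y| := hle
            _ = |u y| := by rw [h3, zero_sub, abs_neg]
      calc ENNReal.ofReal (lam ^ p) * volume (A lam)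
          ≤ ENNReal.ofReal (lam ^ p) *
            ((volume T + volume (Prod.swap ⁻¹' T :
              Set (EuclideanSpace ℝ (Fin N) × EuclideanSpace ℝ (Fin N)))) +
              volume (K ×ˢ K)) := by
            refine mul_le_mul_right ?_ _
            exact le_trans (measure_mono hsub)
              (le_trans (measure_union_le _ _) (add_le_add_left (measure_union_le _ _) _))
        _ = 2 * L + ENNReal.ofReal (lam ^ p) * (c * c) := by
            have hKK : volume (K ×ˢ K) = c * c := by
              rw [Measure.volume_eq_prod, Measure.prod_prod]
            rw [hswapT, hKK, ← two_mul, mul_add,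
              show ENNReal.ofReal (lam ^ p) * (2 * volume T)
                = 2 * (ENNReal.ofReal (lam ^ p) * volume T) by ring, hTmul]
    -- Lower bound
    have hlow : 2 * L ≤ ENNReal.ofReal (lam ^ p) * volume (A lam) +
        2 * (ENNReal.ofReal (lam ^ p) * (c * c)) := by
      set S₁ : Set (EuclideanSpace ℝ (Fin N) × EuclideanSpace ℝ (Fin N)) :=
        (K ×ˢ Kᶜ) ∩ T with hS₁def
      have hS₁m : MeasurableSet S₁ := (hKm.prod hKm.compl).inter hTmeas
      set S₂ : Set (EuclideanSpace ℝ (Fin N) × EuclideanSpace ℝ (Fin N)) :=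
        Prod.swap ⁻¹' S₁ with hS₂def
      have hS₂m : MeasurableSet S₂ := hS₁m.preimage measurable_swap
      have hS₁sub : S₁ ⊆ A lam := by
        rintro ⟨x, y⟩ ⟨⟨hx, hy⟩, hT⟩
        have huy : u y = 0 := image_eq_zero_of_notMem_tsupport hy
        refine ⟨fun h => hy (h ▸ hx), ?_⟩
        simpa [huy, hTdef] using hT
      have hS₂sub : S₂ ⊆ A lam := by
        rintro ⟨x, y⟩ hq
        rw [hS₂def, mem_preimage] at hq
        simp only [hS₁def, Prod.swap_prod_mk, mem_inter_iff, mem_prod, mem_compl_iff] at hq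
        obtain ⟨⟨hy, hx⟩, hT⟩ := hq
        have hux : u x = 0 := image_eq_zero_of_notMem_tsupport hx
        refine ⟨fun h => hx ?_, ?_⟩
        · have hxy : x = y := h
          rw [hxy]; exact hy
        have h4 : lam * dist y x ^ ((N:ℝ)/p) ≤ |u y| := hT
        rw [dist_comm] at h4
        calc lam * dist x y ^ ((N:ℝ)/p) ≤ |u y| := h4
          _ = |u x - u y| := by rw [hux, zero_sub, abs_neg]
      have hdisj : Disjoint S₁ S₂ := by
        rw [Set.disjoint_left]
        rintro ⟨x, y⟩ ⟨⟨hx, _⟩, _⟩ ⟨⟨_, hx'⟩, _⟩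
        exact hx' hx
      have hS₂vol : volume S₂ = volume S₁ := by
        rw [hS₂def, Measure.volume_eq_prod]
        exact Measure.measurePreserving_swap.measure_preimage hS₁m.nullMeasurableSet
      -- key: volume T ≤ volume S₁ + c * c
      have hTle : volume T ≤ volume S₁ + c * c := by
        have hS₁slice : ∀ x ∈ K, closedBall x (r x) ⊆ (Prod.mk x ⁻¹' S₁) ∪ K := by
          intro x hx y hy
          by_cases hyK : y ∈ K
          · exact Or.inr hyK
          · left
            refine ⟨⟨hx, hyK⟩, ?_⟩
            show y ∈ Prod.mk x ⁻¹' T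
            rw [hTslice x]
            exact hy
        have hTzero : ∀ x ∉ K, volume (closedBall x (r x)) = 0 := by
          intro x hx
          rw [hball x, image_eq_zero_of_notMem_tsupport hx]
          simp [Real.zero_rpow hp0.ne']
        have hTK : volume T = ∫⁻ x in K, volume (closedBall x (r x)) := by
          rw [Measure.volume_eq_prod, Measure.prod_apply hTmeas,
            ← lintegral_indicator hKm]
          refine lintegral_congr fun x => ?_
          rw [hTslice x]
          by_cases hx : x ∈ K
          · rw [Set.indicator_of_mem hx]
          · rw [Set.indicator_of_notMem hx, hTzero x hx]
        rw [hTK]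
        calc ∫⁻ x in K, volume (closedBall x (r x))
            ≤ ∫⁻ x in K, (volume (Prod.mk x ⁻¹' S₁) + c) := by
              refine setLIntegral_mono ((measurable_measure_prodMk_left hS₁m).add
                measurable_const) fun x hx => ?_
              exact le_trans (measure_mono (hS₁slice x hx)) (measure_union_le _ _)
          _ = (∫⁻ x in K, volume (Prod.mk x ⁻¹' S₁)) + c * volume K := by
              rw [lintegral_add_right _ measurable_const, setLIntegral_const]
          _ ≤ (∫⁻ x, volume (Prod.mk x ⁻¹' S₁)) + c * c :=
              add_le_add (setLIntegral_le_lintegral _ _) le_rfl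
          _ = volume S₁ + c * c := by
              rw [Measure.volume_eq_prod, Measure.prod_apply hS₁m]
      have hunion : volume S₁ + volume S₂ ≤ volume (A lam) := by
        rw [← measure_union hdisj hS₂m]
        exact measure_mono (union_subset hS₁sub hS₂sub)
      calc 2 * L = 2 * (ENNReal.ofReal (lam ^ p) * volume T) := by rw [hTmul]
        _ ≤ 2 * (ENNReal.ofReal (lam ^ p) * (volume S₁ + c * c)) :=
            mul_le_mul_right (mul_le_mul_right hTle _) _
        _ = ENNReal.ofReal (lam ^ p) * (volume S₁ + volume S₂) +
            2 * (ENNReal.ofReal (lam ^ p) * (c * c)) := by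
            rw [hS₂vol]; ring
        _ ≤ ENNReal.ofReal (lam ^ p) * volume (A lam) +
            2 * (ENNReal.ofReal (lam ^ p) * (c * c)) :=
            add_le_add (mul_le_mul_right hunion _) le_rfl
    exact ⟨hup, hlow⟩
  -- Now the limit argument
  have hlim0 : Tendsto (fun lam : ℝ => ENNReal.ofReal (lam ^ p)) (nhdsWithin 0 (Set.Ioi 0))
      (nhds 0) := by
    have h1 : Tendsto (fun lam : ℝ => lam ^ p) (nhdsWithin 0 (Set.Ioi 0)) (nhds 0) := by
      have h2 := (Real.continuousAt_rpow_const 0 p (Or.inr hp0.le)).tendsto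
      rw [Real.zero_rpow hp0.ne'] at h2
      exact h2.mono_left nhdsWithin_le_nhds
    have h3 := (ENNReal.continuous_ofReal.tendsto 0).comp h1
    simpa [Function.comp_def] using h3
  have hccfin : c * c ≠ ⊤ := ENNReal.mul_ne_top hcfin hcfin
  have hg : Tendsto (fun lam : ℝ => ENNReal.ofReal (lam ^ p) * (c * c))
      (nhdsWithin 0 (Set.Ioi 0)) (nhds 0) := by
    have h5 := ENNReal.Tendsto.mul_const hlim0 (Or.inr hccfin)
    simpa using h5
  have htarget : ENNReal.ofReal (2 * κ.toReal * I) = 2 * L := by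
    rw [mul_assoc, ENNReal.ofReal_mul (by norm_num : (0:ℝ) ≤ 2),
      ENNReal.ofReal_mul ENNReal.toReal_nonneg, ENNReal.ofReal_toReal hκfin,
      ENNReal.ofReal_ofNat, hLdef]
    ring
  rw [htarget]
  have hlower : Tendsto (fun lam : ℝ => 2 * L - 2 * (ENNReal.ofReal (lam ^ p) * (c * c)))
      (nhdsWithin 0 (Set.Ioi 0)) (nhds (2 * L)) := by
    have h2g : Tendsto (fun lam : ℝ => 2 * (ENNReal.ofReal (lam ^ p) * (c * c)))
        (nhdsWithin 0 (Set.Ioi 0)) (nhds 0) := by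
      have h6 := ENNReal.Tendsto.const_mul hg (Or.inr (ENNReal.ofNat_ne_top (n := 2)))
      simpa using h6
    have h7 := ENNReal.Tendsto.sub (tendsto_const_nhds (x := 2 * L)) h2g
      (Or.inl (ENNReal.mul_ne_top (ENNReal.ofNat_ne_top (n := 2)) hLfin))
    simpa using h7
  have hupper : Tendsto (fun lam : ℝ => 2 * L + ENNReal.ofReal (lam ^ p) * (c * c))
      (nhdsWithin 0 (Set.Ioi 0)) (nhds (2 * L)) := by
    have h8 := Tendsto.add (tendsto_const_nhds (x := 2 * L)) hg
    simpa using h8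
  refine tendsto_of_tendsto_of_tendsto_of_le_of_le' hlower hupper ?_ ?_
  · filter_upwards [self_mem_nhdsWithin] with lam hlam
    exact tsub_le_iff_right.mpr ((key lam hlam).2)
  · filter_upwards [self_mem_nhdsWithin] with lam hlam
    exact (key lam hlam).1
end

section
/- Let u ∈ L^p(ℝ^N), 1 ≤ p < ∞ (not necessarily compactly supported). Then lim_{λ→0⁺} λ^p · |E_λ| = 2κ_N ‖u‖_{L^p(ℝ^N)}^p, where E_λ = {(x,y) : x ≠ y, |u(x)-u(y)| ≥ λ|x-y|^{N/p}}. -/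
open MeasureTheory Metric Set Filter

namespace Stmt7Aux

noncomputable section

variable {N : ℕ} {p : ℝ}

local notation "E" => EuclideanSpace ℝ (Fin N)

theorem slice_vol (hN : 1 ≤ N) (hp : 1 ≤ p) (x : E) {lam c : ℝ} (hlam : 0 < lam) (hc : 0 ≤ c) :
    volume {y : E | lam * dist x y ^ ((N : ℝ) / p) ≤ c}
      = ENNReal.ofReal ((c / lam) ^ p) * volume (ball (0 : E) 1) := by
  have hp0 : 0 < p := lt_of_lt_of_le one_pos hp
  have hN0 : (0:ℝ) < (N:ℝ) := by exact_mod_cast hN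
  have he : 0 < (N : ℝ) / p := div_pos hN0 hp0
  have hcl : 0 ≤ c / lam := div_nonneg hc hlam.le
  have hR : 0 ≤ (c / lam) ^ ((N:ℝ)/p)⁻¹ := Real.rpow_nonneg hcl _
  have hset : {y : E | lam * dist x y ^ ((N : ℝ) / p) ≤ c}
      = closedBall x ((c / lam) ^ ((N:ℝ)/p)⁻¹) := by
    ext y
    simp only [mem_setOf_eq, mem_closedBall, dist_comm y x]
    rw [← le_div_iff₀' hlam]
    exact (Real.le_rpow_inv_iff_of_pos dist_nonneg hcl he).symm
  rw [hset, Measure.addHaar_closedBall volume x hR, finrank_euclideanSpace_fin]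
  congr 2
  rw [← Real.rpow_natCast ((c / lam) ^ ((N:ℝ)/p)⁻¹) N, ← Real.rpow_mul hcl]
  congr 1
  field_simp

theorem strip_vol (hN : 1 ≤ N) (hp : 1 ≤ p) {u : E → ℝ} (hu : Measurable u)
    {lam c : ℝ} (hlam : 0 < lam) (hc : 0 ≤ c) :
    volume {q : E × E | lam * dist q.1 q.2 ^ ((N : ℝ) / p) ≤ c * |u q.1|}
      = ENNReal.ofReal ((c / lam) ^ p) *
        (volume (ball (0 : E) 1) * ∫⁻ x, ENNReal.ofReal (|u x| ^ p)) := by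
  have hmeas : MeasurableSet {q : E × E | lam * dist q.1 q.2 ^ ((N : ℝ) / p) ≤ c * |u q.1|} := by
    refine measurableSet_le ?_ ((hu.comp measurable_fst).abs.const_mul c)
    have hd : Continuous fun q : E × E => dist q.1 q.2 := continuous_fst.dist continuous_snd
    exact (continuous_const.mul (hd.rpow_const fun x => Or.inr (by positivity))).measurable
  rw [Measure.volume_eq_prod, Measure.prod_apply hmeas]
  have hsec : ∀ x : E, (Prod.mk x ⁻¹' {q : E × E | lam * dist q.1 q.2 ^ ((N : ℝ) / p) ≤ c * |u q.1|})
      = {y : E | lam * dist x y ^ ((N : ℝ) / p) ≤ c * |u x|} := fun x => rfl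
  calc ∫⁻ x, volume (Prod.mk x ⁻¹' {q : E × E | lam * dist q.1 q.2 ^ ((N : ℝ) / p) ≤ c * |u q.1|})
      = ∫⁻ x, ENNReal.ofReal ((c / lam) ^ p) * volume (ball (0 : E) 1)
          * ENNReal.ofReal (|u x| ^ p) := by
        refine lintegral_congr fun x => ?_
        rw [hsec x, slice_vol hN hp x hlam (mul_nonneg hc (abs_nonneg _))]
        have h1 : c * |u x| / lam = (c / lam) * |u x| := by ring
        rw [h1, Real.mul_rpow (div_nonneg hc hlam.le) (abs_nonneg _),
          ENNReal.ofReal_mul (Real.rpow_nonneg (div_nonneg hc hlam.le) _)]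
        ring
    _ = ENNReal.ofReal ((c / lam) ^ p) *
        (volume (ball (0 : E) 1) * ∫⁻ x, ENNReal.ofReal (|u x| ^ p)) := by
        have hm : Measurable fun x => ENNReal.ofReal (|u x| ^ p) := by
          have : Measurable fun t : ℝ => t ^ p :=
            (continuous_id.rpow_const fun _ => Or.inr (by positivity : (0:ℝ) ≤ p)).measurable
          exact (this.comp hu.abs).ennreal_ofReal
        rw [lintegral_const_mul _ hm, mul_assoc]

theorem lam_cancel (hp : 1 ≤ p) {lam c : ℝ} (hlam : 0 < lam) (hc : 0 ≤ c) :
    ENNReal.ofReal (lam ^ p) * ENNReal.ofReal ((c / lam) ^ p) = ENNReal.ofReal (c ^ p) := by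
  rw [← ENNReal.ofReal_mul (Real.rpow_nonneg hlam.le _),
    ← Real.mul_rpow hlam.le (div_nonneg hc hlam.le)]
  congr 2
  field_simp

theorem swap_vol (hp : 1 ≤ p) {u : E → ℝ} (hu : Measurable u) (lam c : ℝ) :
    volume {q : E × E | lam * dist q.1 q.2 ^ ((N : ℝ) / p) ≤ c * |u q.2|}
      = volume {q : E × E | lam * dist q.1 q.2 ^ ((N : ℝ) / p) ≤ c * |u q.1|} := by
  have hmeas : MeasurableSet {q : E × E | lam * dist q.1 q.2 ^ ((N : ℝ) / p) ≤ c * |u q.1|} := by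
    refine measurableSet_le ?_ ((hu.comp measurable_fst).abs.const_mul c)
    have hd : Continuous fun q : E × E => dist q.1 q.2 := continuous_fst.dist continuous_snd
    exact (continuous_const.mul (hd.rpow_const fun x => Or.inr (by positivity))).measurable
  have hpre : {q : E × E | lam * dist q.1 q.2 ^ ((N : ℝ) / p) ≤ c * |u q.2|}
      = Prod.swap ⁻¹' {q : E × E | lam * dist q.1 q.2 ^ ((N : ℝ) / p) ≤ c * |u q.1|} := by
    ext q
    simp only [mem_setOf_eq, preimage_setOf_eq, Prod.fst_swap, Prod.snd_swap, dist_comm q.2 q.1]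
  rw [hpre, Measure.volume_eq_prod]
  exact (Measure.measurePreserving_swap).measure_preimage hmeas.nullMeasurableSet

theorem min_tendsto (hN : 1 ≤ N) (hp : 1 ≤ p) {u : E → ℝ} (hu : Measurable u)
    (hint : Integrable (fun x => |u x| ^ p)) {c : ℝ} (hc : 0 ≤ c) :
    Tendsto (fun lam : ℝ => ENNReal.ofReal (lam ^ p) *
        volume {q : E × E | lam * dist q.1 q.2 ^ ((N : ℝ) / p) ≤ c * |u q.1| ∧
          lam * dist q.1 q.2 ^ ((N : ℝ) / p) ≤ c * |u q.2|})
      (nhdsWithin 0 (Set.Ioi 0)) (nhds 0) := by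
  have hp0 : 0 < p := lt_of_lt_of_le one_pos hp
  set κ := volume (ball (0 : E) 1) with hκdef
  have hκ : κ ≠ ⊤ := measure_ball_lt_top.ne
  have hrpm : Measurable fun t : ℝ => t ^ p :=
    (continuous_id.rpow_const fun _ => Or.inr hp0.le).measurable
  have hm : Measurable fun x : E => ENNReal.ofReal (|u x| ^ p) :=
    (hrpm.comp hu.abs).ennreal_ofReal
  have hcont : ∀ lam : ℝ, Measurable fun q : E × E => lam * dist q.1 q.2 ^ ((N : ℝ) / p) := by
    intro lam
    have hd : Continuous fun q : E × E => dist q.1 q.2 := continuous_fst.dist continuous_snd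
    exact (continuous_const.mul (hd.rpow_const fun x => Or.inr (by positivity))).measurable
  have hMset : ∀ lam : ℝ, MeasurableSet {q : E × E |
      lam * dist q.1 q.2 ^ ((N : ℝ) / p) ≤ c * |u q.1| ∧
      lam * dist q.1 q.2 ^ ((N : ℝ) / p) ≤ c * |u q.2|} := by
    intro lam
    exact (measurableSet_le (hcont lam) ((hu.comp measurable_fst).abs.const_mul c)).inter
      (measurableSet_le (hcont lam) ((hu.comp measurable_snd).abs.const_mul c))
  set F : ℝ → E → ENNReal := fun lam x => ENNReal.ofReal (lam ^ p) *
    volume {y : E | lam * dist x y ^ ((N : ℝ) / p) ≤ c * |u x| ∧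
      lam * dist x y ^ ((N : ℝ) / p) ≤ c * |u y|} with hFdef
  have hFeq : ∀ lam : ℝ, ENNReal.ofReal (lam ^ p) *
      volume {q : E × E | lam * dist q.1 q.2 ^ ((N : ℝ) / p) ≤ c * |u q.1| ∧
        lam * dist q.1 q.2 ^ ((N : ℝ) / p) ≤ c * |u q.2|} = ∫⁻ x, F lam x := by
    intro lam
    rw [Measure.volume_eq_prod, Measure.prod_apply (hMset lam), hFdef,
      ← lintegral_const_mul _ (measurable_measure_prodMk_left (hMset lam))]
    rfl
  have hFmeas : ∀ lam : ℝ, Measurable (F lam) := fun lam =>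
    (measurable_measure_prodMk_left (hMset lam)).const_mul _
  have hcI : (∫⁻ y, ENNReal.ofReal ((c * |u y|) ^ p)) ≠ ⊤ := by
    have hb1 : ∀ y : E, ENNReal.ofReal ((c * |u y|) ^ p)
        = ENNReal.ofReal (c ^ p) * ENNReal.ofReal (|u y| ^ p) := fun y => by
      rw [Real.mul_rpow hc (abs_nonneg _), ENNReal.ofReal_mul (Real.rpow_nonneg hc _)]
    simp only [hb1]
    rw [lintegral_const_mul _ hm]
    exact ENNReal.mul_ne_top ENNReal.ofReal_ne_top hint.lintegral_lt_top.ne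
  have hm2 : Measurable fun y : E => ENNReal.ofReal ((c * |u y|) ^ p) :=
    (hrpm.comp (hu.abs.const_mul c)).ennreal_ofReal
  set bound : E → ENNReal := fun x => ENNReal.ofReal ((c * |u x|) ^ p) * κ with hbdef
  have hbfin : (∫⁻ x, bound x) ≠ ⊤ := by
    have : (∫⁻ x, bound x) = (∫⁻ y, ENNReal.ofReal ((c * |u y|) ^ p)) * κ := by
      rw [hbdef]; exact lintegral_mul_const _ hm2
    rw [this]
    exact ENNReal.mul_ne_top hcI hκ
  have hFbound : ∀ lam : ℝ, 0 < lam → ∀ x : E, F lam x ≤ bound x := by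
    intro lam hlam x
    have hsub : {y : E | lam * dist x y ^ ((N : ℝ) / p) ≤ c * |u x| ∧
        lam * dist x y ^ ((N : ℝ) / p) ≤ c * |u y|}
        ⊆ {y : E | lam * dist x y ^ ((N : ℝ) / p) ≤ c * |u x|} := fun y hy => hy.1
    calc F lam x ≤ ENNReal.ofReal (lam ^ p) *
        volume {y : E | lam * dist x y ^ ((N : ℝ) / p) ≤ c * |u x|} :=
        mul_le_mul_right (measure_mono hsub) _
      _ = bound x := by
        rw [slice_vol hN hp x hlam (mul_nonneg hc (abs_nonneg _)), ← mul_assoc,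
          lam_cancel hp hlam (mul_nonneg hc (abs_nonneg _))]
  have hlamp : Tendsto (fun lam : ℝ => ENNReal.ofReal (lam ^ p))
      (nhdsWithin 0 (Set.Ioi 0)) (nhds 0) := by
    have h1 : ContinuousAt (fun t : ℝ => t ^ p) 0 :=
      Real.continuousAt_rpow_const 0 p (Or.inr hp0.le)
    have h2 : Tendsto (fun t : ℝ => t ^ p) (nhdsWithin 0 (Set.Ioi 0)) (nhds ((0:ℝ) ^ p)) :=
      h1.tendsto.mono_left nhdsWithin_le_nhds
    rw [Real.zero_rpow hp0.ne'] at h2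
    simpa using ENNReal.tendsto_ofReal h2
  have hFlim : ∀ x : E, Tendsto (fun lam => F lam x) (nhdsWithin 0 (Set.Ioi 0)) (nhds 0) := by
    intro x
    have hlimsup : ∀ δ : ℝ, 0 < δ →
        limsup (fun lam => F lam x) (nhdsWithin 0 (Set.Ioi 0)) ≤ ENNReal.ofReal (δ ^ p) * κ := by
      intro δ hδ
      have hsup : {y : E | δ ≤ c * |u y|} ⊆
          {y : E | ENNReal.ofReal (δ ^ p) ≤ ENNReal.ofReal ((c * |u y|) ^ p)} := fun y hy =>
        ENNReal.ofReal_le_ofReal (Real.rpow_le_rpow hδ.le hy hp0.le)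
      have hmark : ENNReal.ofReal (δ ^ p) *
          volume {y : E | ENNReal.ofReal (δ ^ p) ≤ ENNReal.ofReal ((c * |u y|) ^ p)} ≠ ⊤ :=
        ((mul_meas_ge_le_lintegral₀
          hm2.aemeasurable _).trans_lt
          (lt_of_le_of_ne le_top hcI)).ne
      have hδp : ENNReal.ofReal (δ ^ p) ≠ 0 := by
        simp only [ne_eq, ENNReal.ofReal_eq_zero, not_le]
        exact Real.rpow_pos_of_pos hδ p
      have hMδ : volume {y : E | δ ≤ c * |u y|} ≠ ⊤ :=
        ((measure_mono hsup).trans_lt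
          (ENNReal.lt_top_of_mul_ne_top_right hmark hδp)).ne
      have hpt : ∀ lam : ℝ, 0 < lam → F lam x ≤
          ENNReal.ofReal (δ ^ p) * κ
            + ENNReal.ofReal (lam ^ p) * volume {y : E | δ ≤ c * |u y|} := by
        intro lam hlam
        have hsub : {y : E | lam * dist x y ^ ((N : ℝ) / p) ≤ c * |u x| ∧
            lam * dist x y ^ ((N : ℝ) / p) ≤ c * |u y|}
            ⊆ {y : E | lam * dist x y ^ ((N : ℝ) / p) ≤ δ} ∪ {y : E | δ ≤ c * |u y|} := by
          intro y hy
          by_cases h : lam * dist x y ^ ((N : ℝ) / p) ≤ δ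
          · exact Or.inl h
          · exact Or.inr ((le_of_not_ge h).trans hy.2 |>.trans le_rfl) |>.imp id id |>.elim
              (fun h => Or.inr h) (fun h => Or.inr h)
        calc F lam x ≤ ENNReal.ofReal (lam ^ p) *
            (volume {y : E | lam * dist x y ^ ((N : ℝ) / p) ≤ δ}
              + volume {y : E | δ ≤ c * |u y|}) :=
            mul_le_mul_right ((measure_mono hsub).trans (measure_union_le _ _)) _
          _ = ENNReal.ofReal (lam ^ p) * volume {y : E | lam * dist x y ^ ((N : ℝ) / p) ≤ δ}
              + ENNReal.ofReal (lam ^ p) * volume {y : E | δ ≤ c * |u y|} := by ring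
          _ = ENNReal.ofReal (δ ^ p) * κ
              + ENNReal.ofReal (lam ^ p) * volume {y : E | δ ≤ c * |u y|} := by
            rw [slice_vol hN hp x hlam hδ.le, ← mul_assoc, lam_cancel hp hlam hδ.le]
      have htail : Tendsto (fun lam : ℝ => ENNReal.ofReal (δ ^ p) * κ
          + ENNReal.ofReal (lam ^ p) * volume {y : E | δ ≤ c * |u y|})
          (nhdsWithin 0 (Set.Ioi 0)) (nhds (ENNReal.ofReal (δ ^ p) * κ + 0)) := by
        refine Tendsto.const_add _ ?_
        have := ENNReal.Tendsto.mul_const hlamp (Or.inr hMδ)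
        simpa using this
      have hev : ∀ᶠ lam in nhdsWithin (0:ℝ) (Set.Ioi 0), F lam x ≤
          ENNReal.ofReal (δ ^ p) * κ
            + ENNReal.ofReal (lam ^ p) * volume {y : E | δ ≤ c * |u y|} := by
        filter_upwards [self_mem_nhdsWithin] with lam hlam
        exact hpt lam hlam
      calc limsup (fun lam => F lam x) (nhdsWithin 0 (Set.Ioi 0))
          ≤ limsup (fun lam : ℝ => ENNReal.ofReal (δ ^ p) * κ
            + ENNReal.ofReal (lam ^ p) * volume {y : E | δ ≤ c * |u y|})
            (nhdsWithin 0 (Set.Ioi 0)) := limsup_le_limsup hev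
        _ = ENNReal.ofReal (δ ^ p) * κ + 0 := htail.limsup_eq
        _ = ENNReal.ofReal (δ ^ p) * κ := add_zero _
    have hδκ : Tendsto (fun δ : ℝ => ENNReal.ofReal (δ ^ p) * κ)
        (nhdsWithin 0 (Set.Ioi 0)) (nhds 0) := by
      have := ENNReal.Tendsto.mul_const hlamp (Or.inr hκ)
      simpa using this
    have hls : limsup (fun lam => F lam x) (nhdsWithin 0 (Set.Ioi 0)) ≤ 0 := by
      refine ge_of_tendsto hδκ ?_
      filter_upwards [self_mem_nhdsWithin] with δ hδ
      exact hlimsup δ hδ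
    exact tendsto_of_le_liminf_of_limsup_le zero_le hls
  have hDCT : Tendsto (fun lam => ∫⁻ x, F lam x) (nhdsWithin (0:ℝ) (Set.Ioi 0)) (nhds (∫⁻ _ : E, 0)) := by
    refine tendsto_lintegral_filter_of_dominated_convergence bound ?_ ?_ hbfin ?_
    · exact Eventually.of_forall hFmeas
    · filter_upwards [self_mem_nhdsWithin] with lam hlam
      exact ae_of_all _ (hFbound lam hlam)
    · exact ae_of_all _ hFlim
  simp only [lintegral_zero] at hDCT
  exact Tendsto.congr (fun lam => (hFeq lam).symm) hDCT


end

end Stmt7Aux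

open Stmt7Aux in
set_option maxHeartbeats 1000000 in
theorem stmt7 (N : ℕ) (hN : 1 ≤ N) (p : ℝ) (hp : 1 ≤ p)
    (u : EuclideanSpace ℝ (Fin N) → ℝ) (hu : Measurable u)
    (hint : Integrable (fun x => |u x| ^ p)) :
    Tendsto (fun lam : ℝ => ENNReal.ofReal (lam ^ p) *
        volume {q : EuclideanSpace ℝ (Fin N) × EuclideanSpace ℝ (Fin N) |
          q.1 ≠ q.2 ∧ lam * dist q.1 q.2 ^ ((N : ℝ) / p) ≤ |u q.1 - u q.2|})
      (nhdsWithin 0 (Set.Ioi 0))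
      (nhds (ENNReal.ofReal (2 * (volume (ball (0 : EuclideanSpace ℝ (Fin N)) 1)).toReal *
        ∫ x, |u x| ^ p))) := by
  classical
  have hp0 : 0 < p := lt_of_lt_of_le one_pos hp
  have hN0 : (0:ℝ) < (N:ℝ) := by exact_mod_cast hN
  have he0 : 0 < (N : ℝ) / p := div_pos hN0 hp0
  set κ := volume (ball (0 : EuclideanSpace ℝ (Fin N)) 1) with hκdef
  have hκ : κ ≠ ⊤ := measure_ball_lt_top.ne
  set Il := ∫⁻ x, ENNReal.ofReal (|u x| ^ p) with hIldef
  have hIl : Il ≠ ⊤ := hint.lintegral_lt_top.ne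
  set L : ENNReal := 2 * (κ * Il) with hLdef
  have hL : L ≠ ⊤ := by
    rw [hLdef]
    exact ENNReal.mul_ne_top (by simp) (ENNReal.mul_ne_top hκ hIl)
  -- sets
  set Es : ℝ → Set (EuclideanSpace ℝ (Fin N) × EuclideanSpace ℝ (Fin N)) := fun lam =>
    {q : EuclideanSpace ℝ (Fin N) × EuclideanSpace ℝ (Fin N) | q.1 ≠ q.2 ∧ lam * dist q.1 q.2 ^ ((N : ℝ) / p) ≤ |u q.1 - u q.2|}
    with hEsdef
  set X : ℝ → ℝ → Set (EuclideanSpace ℝ (Fin N) × EuclideanSpace ℝ (Fin N)) := fun c lam =>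
    {q : EuclideanSpace ℝ (Fin N) × EuclideanSpace ℝ (Fin N) | lam * dist q.1 q.2 ^ ((N : ℝ) / p) ≤ c * |u q.1|} with hXdef
  set Y : ℝ → ℝ → Set (EuclideanSpace ℝ (Fin N) × EuclideanSpace ℝ (Fin N)) := fun c lam =>
    {q : EuclideanSpace ℝ (Fin N) × EuclideanSpace ℝ (Fin N) | lam * dist q.1 q.2 ^ ((N : ℝ) / p) ≤ c * |u q.2|} with hYdef
  set M : ℝ → ℝ → Set (EuclideanSpace ℝ (Fin N) × EuclideanSpace ℝ (Fin N)) := fun c lam =>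
    {q : EuclideanSpace ℝ (Fin N) × EuclideanSpace ℝ (Fin N) | lam * dist q.1 q.2 ^ ((N : ℝ) / p) ≤ c * |u q.1| ∧
      lam * dist q.1 q.2 ^ ((N : ℝ) / p) ≤ c * |u q.2|} with hMdef
  set F : ℝ → ENNReal := fun lam => ENNReal.ofReal (lam ^ p) * volume (Es lam) with hFdef
  set T : ℝ → ℝ → ENNReal := fun c lam => ENNReal.ofReal (lam ^ p) * volume (M c lam)
    with hTdef
  have hXvol : ∀ c lam : ℝ, 0 < lam → 0 ≤ c →
      ENNReal.ofReal (lam ^ p) * volume (X c lam) = ENNReal.ofReal (c ^ p) * (κ * Il) := by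
    intro c lam hlam hc
    rw [hXdef]
    simp only
    rw [strip_vol hN hp hu hlam hc, ← mul_assoc, lam_cancel hp hlam hc]
  have hYvol : ∀ c lam : ℝ, 0 < lam → 0 ≤ c →
      ENNReal.ofReal (lam ^ p) * volume (Y c lam) = ENNReal.ofReal (c ^ p) * (κ * Il) := by
    intro c lam hlam hc
    rw [hYdef]
    simp only
    rw [swap_vol hp hu lam c, strip_vol hN hp hu hlam hc, ← mul_assoc, lam_cancel hp hlam hc]
  have hTlim : ∀ c : ℝ, 0 ≤ c → Tendsto (T c) (nhdsWithin 0 (Set.Ioi 0)) (nhds 0) :=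
    fun c hc => min_tendsto hN hp hu hint hc
  -- Upper bound inclusion
  have hup : ∀ ε : ℝ, 0 < ε → ∀ lam : ℝ, 0 < lam →
      F lam ≤ 2 * (ENNReal.ofReal ((1 + ε) ^ p) * (κ * Il)) + T ((1 + ε) / ε) lam := by
    intro ε hε lam hlam
    have hincl : Es lam ⊆ X (1 + ε) lam ∪ Y (1 + ε) lam ∪ M ((1 + ε) / ε) lam := by
      rintro ⟨x, y⟩ ⟨-, hle⟩
      simp only [hXdef, hYdef, hMdef, Set.mem_union, Set.mem_setOf_eq] at *
      by_cases hx : lam * dist x y ^ ((N : ℝ) / p) ≤ (1 + ε) * |u x|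
      · exact Or.inl (Or.inl hx)
      · by_cases hy : lam * dist x y ^ ((N : ℝ) / p) ≤ (1 + ε) * |u y|
        · exact Or.inl (Or.inr hy)
        · push_neg at hx hy
          have habs : |u x - u y| ≤ |u x| + |u y| := abs_sub _ _
          have hD : lam * dist x y ^ ((N : ℝ) / p) ≤ |u x| + |u y| := hle.trans habs
          refine Or.inr ⟨?_, ?_⟩
          · rw [div_mul_eq_mul_div, le_div_iff₀ hε]
            nlinarith
          · rw [div_mul_eq_mul_div, le_div_iff₀ hε]
            nlinarith
    calc F lam ≤ ENNReal.ofReal (lam ^ p) *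
        (volume (X (1 + ε) lam) + volume (Y (1 + ε) lam) + volume (M ((1 + ε) / ε) lam)) := by
          refine mul_le_mul_right ((measure_mono hincl).trans ?_) _
          exact (measure_union_le _ _).trans (add_le_add_left (measure_union_le _ _) _)
      _ = ENNReal.ofReal (lam ^ p) * volume (X (1 + ε) lam)
          + ENNReal.ofReal (lam ^ p) * volume (Y (1 + ε) lam) + T ((1 + ε) / ε) lam := by
          rw [hTdef]; ring
      _ = 2 * (ENNReal.ofReal ((1 + ε) ^ p) * (κ * Il)) + T ((1 + ε) / ε) lam := by
          rw [hXvol _ _ hlam (by positivity), hYvol _ _ hlam (by positivity), two_mul]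
  -- Lower bound inequality
  have hlow : ∀ ε : ℝ, 0 < ε → ε < 1 → ∀ lam : ℝ, 0 < lam →
      2 * (ENNReal.ofReal ((1 - ε) ^ p) * (κ * Il))
        ≤ F lam + 2 * T ((1 - ε) / ε) lam := by
    intro ε hε hε1 lam hlam
    have hε1' : 0 < 1 - ε := by linarith
    have hCge : (1 - ε) ≤ (1 - ε) / ε := by
      rw [le_div_iff₀ hε]; nlinarith
    have hYmeas : MeasurableSet (Y (1 - ε) lam) := by
      rw [hYdef]
      refine measurableSet_le ?_ ((hu.comp measurable_snd).abs.const_mul _)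
      have hd : Continuous fun q : EuclideanSpace ℝ (Fin N) × EuclideanSpace ℝ (Fin N) => dist q.1 q.2 := continuous_fst.dist continuous_snd
      exact (continuous_const.mul (hd.rpow_const fun x => Or.inr he0.le)).measurable
    have hincl1 : X (1 - ε) lam ∪ Y (1 - ε) lam ⊆ Es lam ∪ M ((1 - ε) / ε) lam := by
      rintro ⟨x, y⟩ hq
      by_cases hm : (⟨x, y⟩ : EuclideanSpace ℝ (Fin N) × EuclideanSpace ℝ (Fin N)) ∈ M ((1 - ε) / ε) lam
      · exact Or.inr hm
      · left
        simp only [hXdef, hYdef, hMdef, hEsdef, Set.mem_union, Set.mem_setOf_eq] at *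
        have hD0 : 0 ≤ lam * dist x y ^ ((N : ℝ) / p) :=
          mul_nonneg hlam.le (Real.rpow_nonneg dist_nonneg _)
        have hne : x ≠ y := by
          intro hxy
          subst hxy
          apply hm
          have : lam * dist x x ^ ((N : ℝ) / p) = 0 := by
            rw [dist_self, Real.zero_rpow he0.ne', mul_zero]
          constructor <;> rw [this] <;> positivity
        push_neg at hm
        rcases hq with hx | hy
        · have hm2 : (1 - ε) / ε * |u y| < lam * dist x y ^ ((N : ℝ) / p) := by
            by_contra hcon
            push_neg at hcon
            exact absurd (hm (hx.trans (by nlinarith [abs_nonneg (u x)]))) (not_lt.mpr hcon)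
          have h2' : (1 - ε) * |u y| < ε * (lam * dist x y ^ ((N : ℝ) / p)) := by
            rw [div_mul_eq_mul_div, div_lt_iff₀ hε] at hm2
            linarith
          have habs : |u x| - |u y| ≤ |u x - u y| := abs_sub_abs_le_abs_sub _ _
          exact ⟨hne, by nlinarith⟩
        · have hm2 : (1 - ε) / ε * |u x| < lam * dist x y ^ ((N : ℝ) / p) := by
            by_contra hcon
            push_neg at hcon
            exact absurd (hm hcon) (not_lt.mpr (hy.trans (by nlinarith [abs_nonneg (u y)])))
          have h2' : (1 - ε) * |u x| < ε * (lam * dist x y ^ ((N : ℝ) / p)) := by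
            rw [div_mul_eq_mul_div, div_lt_iff₀ hε] at hm2
            linarith
          have habs : |u y| - |u x| ≤ |u y - u x| := abs_sub_abs_le_abs_sub _ _
          rw [abs_sub_comm (u y) (u x)] at habs
          exact ⟨hne, by nlinarith⟩
    have hincl2 : X (1 - ε) lam ∩ Y (1 - ε) lam ⊆ M ((1 - ε) / ε) lam := by
      rintro ⟨x, y⟩ ⟨hx, hy⟩
      simp only [hXdef, hYdef, hMdef, Set.mem_setOf_eq] at *
      exact ⟨hx.trans (by nlinarith [abs_nonneg (u x)]),
        hy.trans (by nlinarith [abs_nonneg (u y)])⟩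
    have hkey : volume (X (1 - ε) lam) + volume (Y (1 - ε) lam)
        ≤ volume (Es lam) + 2 * volume (M ((1 - ε) / ε) lam) := by
      rw [← measure_union_add_inter _ hYmeas]
      calc volume (X (1 - ε) lam ∪ Y (1 - ε) lam) + volume (X (1 - ε) lam ∩ Y (1 - ε) lam)
          ≤ volume (Es lam ∪ M ((1 - ε) / ε) lam) + volume (M ((1 - ε) / ε) lam) :=
            add_le_add (measure_mono hincl1) (measure_mono hincl2)
        _ ≤ volume (Es lam) + volume (M ((1 - ε) / ε) lam) + volume (M ((1 - ε) / ε) lam) :=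
            add_le_add_left (measure_union_le _ _) _
        _ = volume (Es lam) + 2 * volume (M ((1 - ε) / ε) lam) := by ring
    calc 2 * (ENNReal.ofReal ((1 - ε) ^ p) * (κ * Il))
        = ENNReal.ofReal (lam ^ p) * volume (X (1 - ε) lam)
          + ENNReal.ofReal (lam ^ p) * volume (Y (1 - ε) lam) := by
          rw [hXvol _ _ hlam hε1'.le, hYvol _ _ hlam hε1'.le, two_mul]
      _ = ENNReal.ofReal (lam ^ p) * (volume (X (1 - ε) lam) + volume (Y (1 - ε) lam)) := by
          ring
      _ ≤ ENNReal.ofReal (lam ^ p) * (volume (Es lam) + 2 * volume (M ((1 - ε) / ε) lam)) :=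
          mul_le_mul_right hkey _
      _ = F lam + 2 * T ((1 - ε) / ε) lam := by
          rw [hFdef, hTdef]; ring
  -- limsup bound
  have hlimsup : limsup F (nhdsWithin 0 (Set.Ioi 0)) ≤ L := by
    have hbound : ∀ ε : ℝ, 0 < ε → limsup F (nhdsWithin 0 (Set.Ioi 0))
        ≤ 2 * (ENNReal.ofReal ((1 + ε) ^ p) * (κ * Il)) := by
      intro ε hε
      have htail : Tendsto (fun lam => 2 * (ENNReal.ofReal ((1 + ε) ^ p) * (κ * Il))
          + T ((1 + ε) / ε) lam) (nhdsWithin 0 (Set.Ioi 0))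
          (nhds (2 * (ENNReal.ofReal ((1 + ε) ^ p) * (κ * Il)) + 0)) :=
        Tendsto.const_add _ (hTlim _ (by positivity))
      have hev : ∀ᶠ lam in nhdsWithin (0:ℝ) (Set.Ioi 0),
          F lam ≤ 2 * (ENNReal.ofReal ((1 + ε) ^ p) * (κ * Il)) + T ((1 + ε) / ε) lam := by
        filter_upwards [self_mem_nhdsWithin] with lam hlam
        exact hup ε hε lam hlam
      calc limsup F (nhdsWithin 0 (Set.Ioi 0)) ≤ _ := limsup_le_limsup hev
        _ = 2 * (ENNReal.ofReal ((1 + ε) ^ p) * (κ * Il)) + 0 := htail.limsup_eq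
        _ = _ := add_zero _
    have hconst : Tendsto (fun ε : ℝ => 2 * (ENNReal.ofReal ((1 + ε) ^ p) * (κ * Il)))
        (nhdsWithin 0 (Set.Ioi 0)) (nhds L) := by
      have h1 : Tendsto (fun ε : ℝ => (1 + ε) ^ p) (nhdsWithin 0 (Set.Ioi 0)) (nhds 1) := by
        have hc : ContinuousAt (fun t : ℝ => t ^ p) 1 :=
          Real.continuousAt_rpow_const 1 p (Or.inl one_ne_zero)
        have hadd : Tendsto (fun ε : ℝ => 1 + ε) (nhdsWithin 0 (Set.Ioi 0)) (nhds 1) := by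
          have h0 : Tendsto (fun ε : ℝ => 1 + ε) (nhds 0) (nhds (1 + 0)) :=
            Filter.Tendsto.const_add 1 tendsto_id
          rw [add_zero] at h0
          exact h0.mono_left nhdsWithin_le_nhds
        have := hc.tendsto.comp hadd
        simpa [Real.one_rpow, Function.comp_def] using this
      have h2 : Tendsto (fun ε : ℝ => ENNReal.ofReal ((1 + ε) ^ p) * (κ * Il))
          (nhdsWithin 0 (Set.Ioi 0)) (nhds (1 * (κ * Il))) := by
        refine ENNReal.Tendsto.mul_const ?_ (Or.inl one_ne_zero)
        simpa using ENNReal.tendsto_ofReal h1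
      rw [one_mul] at h2
      have := ENNReal.Tendsto.const_mul h2 (Or.inr (by simp : (2:ENNReal) ≠ ⊤))
      exact this
    refine ge_of_tendsto hconst ?_
    filter_upwards [self_mem_nhdsWithin] with ε hε
    exact hbound ε hε
  -- liminf bound
  have hliminf : L ≤ liminf F (nhdsWithin 0 (Set.Ioi 0)) := by
    have hbound : ∀ ε : ℝ, 0 < ε → ε < 1 →
        2 * (ENNReal.ofReal ((1 - ε) ^ p) * (κ * Il)) ≤ liminf F (nhdsWithin 0 (Set.Ioi 0)) := by
      intro ε hε hε1
      refine ENNReal.le_of_forall_pos_le_add fun η hη _ => ?_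
      have h2T : Tendsto (fun lam => 2 * T ((1 - ε) / ε) lam) (nhdsWithin 0 (Set.Ioi 0))
          (nhds 0) := by
        have := ENNReal.Tendsto.const_mul (hTlim ((1 - ε) / ε) (div_nonneg (by linarith) hε.le))
          (Or.inr (by simp : (2:ENNReal) ≠ ⊤))
        simpa using this
      have hη0 : (0 : ENNReal) < η := by exact_mod_cast hη
      have hevT : ∀ᶠ lam in nhdsWithin (0:ℝ) (Set.Ioi 0),
          2 * T ((1 - ε) / ε) lam < (η : ENNReal) :=
        h2T.eventually_lt_const hη0
      have hev : ∀ᶠ lam in nhdsWithin (0:ℝ) (Set.Ioi 0),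
          2 * (ENNReal.ofReal ((1 - ε) ^ p) * (κ * Il)) - (η : ENNReal) ≤ F lam := by
        filter_upwards [self_mem_nhdsWithin, hevT] with lam hlam hT
        refine tsub_le_iff_right.mpr ?_
        exact (hlow ε hε hε1 lam hlam).trans (add_le_add_right hT.le _)
      have := le_liminf_of_le (by isBoundedDefault) hev
      exact tsub_le_iff_right.mp this
    have hconst : Tendsto (fun ε : ℝ => 2 * (ENNReal.ofReal ((1 - ε) ^ p) * (κ * Il)))
        (nhdsWithin 0 (Set.Ioi 0)) (nhds L) := by
      have h1 : Tendsto (fun ε : ℝ => (1 - ε) ^ p) (nhdsWithin 0 (Set.Ioi 0)) (nhds 1) := by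
        have hc : ContinuousAt (fun t : ℝ => t ^ p) 1 :=
          Real.continuousAt_rpow_const 1 p (Or.inl one_ne_zero)
        have hadd : Tendsto (fun ε : ℝ => 1 - ε) (nhdsWithin 0 (Set.Ioi 0)) (nhds 1) := by
          have h0 : Tendsto (fun ε : ℝ => 1 - ε) (nhds 0) (nhds (1 - 0)) :=
            Filter.Tendsto.const_sub 1 tendsto_id
          rw [sub_zero] at h0
          exact h0.mono_left nhdsWithin_le_nhds
        have := hc.tendsto.comp hadd
        simpa [Real.one_rpow, Function.comp_def] using this
      have h2 : Tendsto (fun ε : ℝ => ENNReal.ofReal ((1 - ε) ^ p) * (κ * Il))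
          (nhdsWithin 0 (Set.Ioi 0)) (nhds (1 * (κ * Il))) := by
        refine ENNReal.Tendsto.mul_const ?_ (Or.inl one_ne_zero)
        simpa using ENNReal.tendsto_ofReal h1
      rw [one_mul] at h2
      exact ENNReal.Tendsto.const_mul h2 (Or.inr (by simp : (2:ENNReal) ≠ ⊤))
    refine le_of_tendsto hconst ?_
    have hev1 : ∀ᶠ ε in nhdsWithin (0:ℝ) (Set.Ioi 0), ε < 1 :=
      (eventually_lt_nhds zero_lt_one).filter_mono nhdsWithin_le_nhds
    filter_upwards [self_mem_nhdsWithin, hev1] with ε hε hε1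
    exact hbound ε hε hε1
  -- conclude
  have hLval : ENNReal.ofReal (2 * κ.toReal * ∫ x, |u x| ^ p) = L := by
    have hI0 : 0 ≤ ∫ x, |u x| ^ p := integral_nonneg fun x => Real.rpow_nonneg (abs_nonneg _) _
    have hIeq : ENNReal.ofReal (∫ x, |u x| ^ p) = Il :=
      ofReal_integral_eq_lintegral_ofReal hint
        (ae_of_all _ fun x => Real.rpow_nonneg (abs_nonneg _) _)
    rw [ENNReal.ofReal_mul (by positivity), ENNReal.ofReal_mul (by norm_num : (0:ℝ) ≤ 2),
      hIeq, ENNReal.ofReal_ofNat, ENNReal.ofReal_toReal hκ, hLdef, mul_assoc]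
  rw [hLval]
  exact tendsto_of_le_liminf_of_limsup_le hliminf hlimsup
end

section
/- For every u ∈ L^p(ℝ^N), 1 ≤ p < ∞, one has (2κ_N)^{1/p} ‖u‖_{L^p(ℝ^N)} ≤ [ (u(x)-u(y))/|x-y|^{N/p} ]_{L^{p,∞}(ℝ^N × ℝ^N)}, i.e. the weak-L^p quasi-norm of the difference quotient on the product space dominates (2κ_N)^{1/p} times the L^p norm of u. -/
open MeasureTheory Metric Set Filter
open scoped ENNReal NNReal

lemma lintegral_sup_trunc {α : Type*} [MeasurableSpace α] (μ : Measure α)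
    (u : α → ℝ) (hu : Measurable u) (f : α → ℝ≥0∞) (hf : Measurable f)
    (hf0 : ∀ x, u x = 0 → f x = 0) :
    (∫⁻ x, f x ∂μ) = ⨆ n : ℕ, ∫⁻ x in {x | 1/(n+1 : ℝ) ≤ |u x|}, f x ∂μ := by
  have hG : ∀ n : ℕ, MeasurableSet {x | 1/(n+1 : ℝ) ≤ |u x|} := fun n =>
    measurableSet_le measurable_const hu.abs
  have hmono : Monotone (fun n : ℕ => ({x | 1/(n+1 : ℝ) ≤ |u x|}).indicator f) := by
    intro n m hnm
    have hsub : {x | 1/(n+1 : ℝ) ≤ |u x|} ⊆ {x | 1/(m+1 : ℝ) ≤ |u x|} := by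
      intro y hy
      simp only [Set.mem_setOf_eq] at hy ⊢
      refine le_trans ?_ hy
      apply one_div_le_one_div_of_le (by positivity)
      have : (n : ℝ) ≤ (m : ℝ) := Nat.cast_le.mpr hnm
      linarith
    intro x
    exact Set.indicator_le_indicator_of_subset hsub (fun _ => zero_le) x
  have hpt : ∀ x, f x = ⨆ n : ℕ, ({x | 1/(n+1 : ℝ) ≤ |u x|}).indicator f x := by
    intro x
    apply le_antisymm
    · rcases eq_or_ne (u x) 0 with h | h
      · simp [hf0 x h]
      · obtain ⟨n, hn⟩ := exists_nat_one_div_lt (abs_pos.mpr h)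
        refine le_trans ?_ (le_iSup _ n)
        rw [Set.indicator_of_mem (by exact hn.le)]
    · exact iSup_le fun n => Set.indicator_le_self _ _ x
  calc (∫⁻ x, f x ∂μ) = ∫⁻ x, ⨆ n : ℕ, ({x | 1/(n+1 : ℝ) ≤ |u x|}).indicator f x ∂μ := by
        congr 1; funext x; exact hpt x
    _ = ⨆ n : ℕ, ∫⁻ x, ({x | 1/(n+1 : ℝ) ≤ |u x|}).indicator f x ∂μ :=
        lintegral_iSup (fun n => hf.indicator (hG n)) hmono
    _ = ⨆ n : ℕ, ∫⁻ x in {x | 1/(n+1 : ℝ) ≤ |u x|}, f x ∂μ := by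
        refine iSup_congr fun n => ?_
        rw [lintegral_indicator (hG n)]

set_option maxHeartbeats 1000000 in
lemma bvy_key (N : ℕ) (hN : 1 ≤ N) (p : ℝ) (hp : 1 ≤ p)
    (u : EuclideanSpace ℝ (Fin N) → ℝ) (hu : Measurable u)
    (hint : Integrable (fun x => |u x| ^ p)) (c : ℝ)
    (hc : ENNReal.ofReal c < 2 * volume (ball (0 : EuclideanSpace ℝ (Fin N)) 1)
        * ∫⁻ x, ENNReal.ofReal (|u x| ^ p)) :
    ∃ lam ∈ Set.Ioi (0:ℝ), ENNReal.ofReal c ≤ ENNReal.ofReal (lam ^ p) *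
      volume {q : EuclideanSpace ℝ (Fin N) × EuclideanSpace ℝ (Fin N) |
        q.1 ≠ q.2 ∧ lam * dist q.1 q.2 ^ ((N : ℝ) / p) ≤ |u q.1 - u q.2|} := by
  haveI : Nonempty (Fin N) := ⟨⟨0, hN⟩⟩
  haveI : NullSingletonClass (volume : Measure (EuclideanSpace ℝ (Fin N))) := by infer_instance
  have hp0 : 0 < p := lt_of_lt_of_le one_pos hp
  have hN0 : 0 < (N : ℝ) := by exact_mod_cast hN
  set f : (EuclideanSpace ℝ (Fin N)) → ℝ≥0∞ := fun x => ENNReal.ofReal (|u x| ^ p) with hfdef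
  have hfmeas : Measurable f :=
    ENNReal.measurable_ofReal.comp ((Real.continuous_rpow_const hp0.le).measurable.comp hu.abs)
  have hL : (∫⁻ x, f x) < ⊤ := hint.lintegral_lt_top
  rcases le_or_gt c 0 with hc0 | hc0
  · exact ⟨1, mem_Ioi.mpr one_pos, by simp [ENNReal.ofReal_eq_zero.mpr hc0]⟩
  set K' := volume (ball (0 : (EuclideanSpace ℝ (Fin N))) 1) with hK'def
  have hK0 : 0 < K' := measure_ball_pos _ _ one_pos
  have hKt : K' ≠ ⊤ := measure_ball_lt_top.ne
  -- find the truncation level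
  rw [lintegral_sup_trunc volume u hu f hfmeas
      (fun x hx => by simp [hfdef, hx, abs_zero, Real.zero_rpow hp0.ne']),
    ENNReal.mul_iSup] at hc
  obtain ⟨n, hn⟩ := lt_iSup_iff.mp hc
  set a : ℝ := 1/(n+1 : ℝ) with hadef
  have ha : 0 < a := by positivity
  set G : Set (EuclideanSpace ℝ (Fin N)) := {x | a ≤ |u x|} with hGdef
  have hGmeas : MeasurableSet G := measurableSet_le measurable_const hu.abs
  set Ln := ∫⁻ x in G, f x with hLndef
  have hLnt : Ln ≠ ⊤ := ((setLIntegral_le_lintegral _ _).trans_lt hL).ne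
  set D := 2 * K' * Ln with hDdef
  have hcD : ENNReal.ofReal c < D := hn
  have hD0 : 0 < D := lt_trans (ENNReal.ofReal_pos.mpr hc0) hcD
  have hDt : D ≠ ⊤ := ENNReal.mul_ne_top (ENNReal.mul_ne_top (by simp) hKt) hLnt
  have hDr : 0 < D.toReal := ENNReal.toReal_pos hD0.ne' hDt
  set s := c / D.toReal with hsdef
  have hs0 : 0 < s := div_pos hc0 hDr
  have hs1 : s < 1 := (div_lt_one hDr).mpr ((ENNReal.ofReal_lt_iff_lt_toReal hc0.le hDt).mp hcD)
  set t := s ^ ((1:ℝ)/(p+1)) with htdef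
  have ht0 : 0 < t := Real.rpow_pos_of_pos hs0 _
  have ht1 : t < 1 := Real.rpow_lt_one hs0.le hs1 (by positivity)
  have htp : t * t ^ p = s := by
    have h1 : t * t ^ p = t ^ (1 + p) := by
      rw [Real.rpow_add ht0, Real.rpow_one]
    rw [h1, htdef, ← Real.rpow_mul hs0.le]
    rw [show (1:ℝ)/(p+1) * (1+p) = 1 by field_simp; ring, Real.rpow_one]
  have hceq : ENNReal.ofReal c = ENNReal.ofReal t * ENNReal.ofReal (t ^ p) * D := by
    have h1 : c = t * t ^ p * D.toReal := by
      rw [htp, hsdef, div_mul_cancel₀ _ hDr.ne']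
    rw [h1, ENNReal.ofReal_mul (by positivity), ENNReal.ofReal_mul ht0.le,
      ENNReal.ofReal_toReal hDt]
  -- the bad set
  set C := volume {y : (EuclideanSpace ℝ (Fin N)) | (1-t) * a < |u y|} with hCdef
  have hCt : C ≠ ⊤ := by
    have hε : 0 < (1-t) * a := by nlinarith
    set ε := ENNReal.ofReal (((1-t) * a) ^ p) with hεdef
    have hε0 : 0 < ε := ENNReal.ofReal_pos.mpr (Real.rpow_pos_of_pos hε _)
    have hsub : {y : (EuclideanSpace ℝ (Fin N)) | (1-t) * a < |u y|} ⊆ {y : (EuclideanSpace ℝ (Fin N)) | ε ≤ f y} := by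
      intro y hy
      exact ENNReal.ofReal_le_ofReal (Real.rpow_le_rpow hε.le (le_of_lt hy) hp0.le)
    have h2 : ε * C ≤ ∫⁻ x, f x :=
      le_trans (mul_le_mul_right (measure_mono hsub) ε)
        (mul_meas_ge_le_lintegral₀ hfmeas.aemeasurable ε)
    intro htop
    rw [htop, ENNReal.mul_top hε0.ne'] at h2
    exact hL.ne (top_le_iff.mp h2)
  -- budget B and choice of lam
  set B := ENNReal.ofReal (1-t) * ENNReal.ofReal ((t*a)^p) * K' with hBdef
  have hB0 : 0 < B := by
    apply ENNReal.mul_pos (ne_of_gt _) hK0.ne'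
    apply ENNReal.mul_pos (ENNReal.ofReal_pos.mpr (by linarith)).ne'
      (ENNReal.ofReal_pos.mpr (Real.rpow_pos_of_pos (by positivity) _)).ne'
  have hBt : B ≠ ⊤ := ENNReal.mul_ne_top (ENNReal.mul_ne_top ENNReal.ofReal_ne_top
    ENNReal.ofReal_ne_top) hKt
  have hC1t : C + 1 ≠ ⊤ := ENNReal.add_ne_top.mpr ⟨hCt, ENNReal.one_ne_top⟩
  have hBC0 : B / (C+1) ≠ 0 := ENNReal.div_ne_zero.mpr ⟨hB0.ne', hC1t⟩
  have hBCt : B / (C+1) ≠ ⊤ := (ENNReal.div_lt_top hBt (by simp)).ne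
  set m := min 1 (B/(C+1)).toReal with hmdef
  have hm0 : 0 < m := lt_min one_pos (ENNReal.toReal_pos hBC0 hBCt)
  set lam := m ^ ((1:ℝ)/p) with hlamdef
  have hlam0 : 0 < lam := Real.rpow_pos_of_pos hm0 _
  have hlamp : lam ^ p = m := by
    rw [hlamdef, ← Real.rpow_mul hm0.le, one_div_mul_cancel hp0.ne', Real.rpow_one]
  have hlampos : 0 < ENNReal.ofReal (lam ^ p) := ENNReal.ofReal_pos.mpr (by positivity)
  have hlamt : ENNReal.ofReal (lam ^ p) ≠ ⊤ := ENNReal.ofReal_ne_top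
  have hlamC : ENNReal.ofReal (lam ^ p) * C ≤ B := by
    rw [hlamp]
    calc ENNReal.ofReal m * C ≤ B/(C+1) * (C+1) := by
          apply mul_le_mul'
          · calc ENNReal.ofReal m ≤ ENNReal.ofReal ((B/(C+1)).toReal) :=
                  ENNReal.ofReal_le_ofReal (min_le_right _ _)
              _ = B/(C+1) := ENNReal.ofReal_toReal hBCt
          · exact self_le_add_right _ _
      _ = B := ENNReal.div_mul_cancel (by simp) hC1t
  -- the good set A
  set A : Set ((EuclideanSpace ℝ (Fin N)) × (EuclideanSpace ℝ (Fin N))) := {q : (EuclideanSpace ℝ (Fin N)) × (EuclideanSpace ℝ (Fin N)) | q.1 ≠ q.2 ∧ (a ≤ |u q.1| ∧ |u q.2| ≤ (1-t) * |u q.1|)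
      ∧ lam * dist q.1 q.2 ^ ((N : ℝ)/p) ≤ t * |u q.1|} with hAdef
  have hAmeas : MeasurableSet A := by
    have h1 : MeasurableSet {q : (EuclideanSpace ℝ (Fin N)) × (EuclideanSpace ℝ (Fin N)) | q.1 ≠ q.2} :=
      (isClosed_diagonal.measurableSet).compl
    have h2 : MeasurableSet {q : (EuclideanSpace ℝ (Fin N)) × (EuclideanSpace ℝ (Fin N)) | a ≤ |u q.1|} :=
      measurableSet_le measurable_const (hu.comp measurable_fst).abs
    have h3 : MeasurableSet {q : (EuclideanSpace ℝ (Fin N)) × (EuclideanSpace ℝ (Fin N)) | |u q.2| ≤ (1-t) * |u q.1|} :=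
      measurableSet_le (hu.comp measurable_snd).abs
        (measurable_const.mul (hu.comp measurable_fst).abs)
    have h4 : MeasurableSet {q : (EuclideanSpace ℝ (Fin N)) × (EuclideanSpace ℝ (Fin N)) | lam * dist q.1 q.2 ^ ((N : ℝ)/p) ≤ t * |u q.1|} :=
      measurableSet_le
        (measurable_const.mul ((Real.continuous_rpow_const (by positivity)).measurable.comp
          continuous_dist.measurable))
        (measurable_const.mul (hu.comp measurable_fst).abs)
    exact h1.inter (h2.inter h3 |>.inter h4)
  have hswmeas : MeasurableSet (Prod.swap ⁻¹' A : Set ((EuclideanSpace ℝ (Fin N)) × (EuclideanSpace ℝ (Fin N)))) := measurable_swap hAmeas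
  set E : Set ((EuclideanSpace ℝ (Fin N)) × (EuclideanSpace ℝ (Fin N))) := {q : (EuclideanSpace ℝ (Fin N)) × (EuclideanSpace ℝ (Fin N)) | q.1 ≠ q.2 ∧ lam * dist q.1 q.2 ^ ((N : ℝ)/p) ≤ |u q.1 - u q.2|}
    with hEdef
  have hAE : A ∪ Prod.swap ⁻¹' A ⊆ E := by
    apply Set.union_subset
    · rintro q ⟨hne, ⟨ha1, ha2⟩, ha3⟩
      refine ⟨hne, le_trans ha3 ?_⟩
      have h := abs_sub_abs_le_abs_sub (u q.1) (u q.2)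
      nlinarith
    · rintro q hq
      obtain ⟨hne, ⟨ha1, ha2⟩, ha3⟩ := hq
      simp only [Prod.fst_swap, Prod.snd_swap] at hne ha1 ha2 ha3
      refine ⟨Ne.symm hne, ?_⟩
      rw [dist_comm q.1 q.2, abs_sub_comm]
      refine le_trans ha3 ?_
      have h := abs_sub_abs_le_abs_sub (u q.2) (u q.1)
      nlinarith
  have hdisj : Disjoint A (Prod.swap ⁻¹' A) := by
    rw [Set.disjoint_left]
    rintro q ⟨_, ⟨hb1, hb2⟩, _⟩ ⟨_, ⟨hb3, hb4⟩, _⟩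
    simp only [Prod.fst_swap, Prod.snd_swap] at hb3 hb4
    nlinarith
  have hswvol : (volume : Measure ((EuclideanSpace ℝ (Fin N)) × (EuclideanSpace ℝ (Fin N)))) (Prod.swap ⁻¹' A) = volume A := by
    rw [Measure.volume_eq_prod]
    exact Measure.measurePreserving_swap.measure_preimage hAmeas.nullMeasurableSet
  have hEbound : 2 * volume A ≤ volume E := by
    calc 2 * volume A = volume A + volume (Prod.swap ⁻¹' A) := by rw [hswvol, two_mul]
      _ = volume (A ∪ Prod.swap ⁻¹' A) := (measure_union hdisj hswmeas).symm
      _ ≤ volume E := measure_mono hAE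
  -- radius
  set R : (EuclideanSpace ℝ (Fin N)) → ℝ := fun x => (t * |u x| / lam) ^ (p / (N : ℝ)) with hRdef
  have hsl : ∀ x ∈ G, volume (closedBall x (R x)) ≤ volume (Prod.mk x ⁻¹' A) + C := by
    intro x hx
    have hsub : closedBall x (R x) ⊆
        (Prod.mk x ⁻¹' A) ∪ ({y : (EuclideanSpace ℝ (Fin N)) | (1-t) * a < |u y|} ∪ {x}) := by
      intro y hy
      by_cases h1 : y = x
      · exact Or.inr (Or.inr h1)
      by_cases h2 : (1-t) * a < |u y|
      · exact Or.inr (Or.inl h2)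
      left
      have hz0 : 0 ≤ t * |u x| / lam := by positivity
      have hdxy : dist x y ≤ R x := by
        rw [dist_comm]; exact mem_closedBall.mp hy
      refine ⟨fun he => h1 he.symm, ⟨hx, ?_⟩, ?_⟩
      · calc |u y| ≤ (1-t) * a := le_of_not_gt h2
          _ ≤ (1-t) * |u x| := by
            apply mul_le_mul_of_nonneg_left hx (by linarith)
      · have hRpow : (R x) ^ ((N : ℝ)/p) = t * |u x| / lam := by
          rw [hRdef]
          rw [← Real.rpow_mul hz0]
          rw [show p / (N:ℝ) * ((N:ℝ)/p) = 1 by field_simp, Real.rpow_one]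
        calc lam * dist x y ^ ((N : ℝ)/p) ≤ lam * (R x) ^ ((N : ℝ)/p) := by
              apply mul_le_mul_of_nonneg_left _ hlam0.le
              exact Real.rpow_le_rpow dist_nonneg hdxy (by positivity)
          _ = t * |u x| := by rw [hRpow, mul_comm, div_mul_cancel₀ _ hlam0.ne']
    calc volume (closedBall x (R x))
        ≤ volume ((Prod.mk x ⁻¹' A) ∪ ({y : (EuclideanSpace ℝ (Fin N)) | (1-t) * a < |u y|} ∪ {x})) := measure_mono hsub
      _ ≤ volume (Prod.mk x ⁻¹' A) + volume ({y : (EuclideanSpace ℝ (Fin N)) | (1-t) * a < |u y|} ∪ {x}) :=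
          measure_union_le _ _
      _ ≤ volume (Prod.mk x ⁻¹' A) + (C + volume ({x} : Set (EuclideanSpace ℝ (Fin N)))) := by
          gcongr; exact measure_union_le _ _
      _ = volume (Prod.mk x ⁻¹' A) + C := by rw [measure_singleton, add_zero]
  have hcball : ∀ x, 0 ≤ |u x| → volume (closedBall x (R x)) =
      ENNReal.ofReal ((t * |u x|) ^ p) / ENNReal.ofReal (lam ^ p) * K' := by
    intro x _
    have hR0 : 0 ≤ R x := Real.rpow_nonneg (by positivity) _
    rw [Measure.addHaar_closedBall volume x hR0]
    have hz0 : 0 ≤ t * |u x| / lam := by positivity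
    have h1 : (R x) ^ (Module.finrank ℝ (EuclideanSpace ℝ (Fin N))) = (t * |u x|) ^ p / lam ^ p := by
      rw [finrank_euclideanSpace_fin, ← Real.rpow_natCast (R x) N, hRdef,
        ← Real.rpow_mul hz0]
      rw [show p / (N:ℝ) * (N:ℝ) = p by field_simp]
      exact Real.div_rpow (by positivity) hlam0.le p
    rw [h1, ENNReal.ofReal_div_of_pos (by positivity)]
  -- main pointwise bound
  have hmain : ∀ x ∈ G, ENNReal.ofReal t * (ENNReal.ofReal ((t * |u x|) ^ p) * K')
      ≤ ENNReal.ofReal (lam ^ p) * volume (Prod.mk x ⁻¹' A) := by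
    intro x hx
    set F := ENNReal.ofReal ((t * |u x|) ^ p) * K' with hFdef
    have hFt : F ≠ ⊤ := ENNReal.mul_ne_top ENNReal.ofReal_ne_top hKt
    have h1 : F = ENNReal.ofReal (lam ^ p) * volume (closedBall x (R x)) := by
      rw [hcball x (abs_nonneg _), hFdef, ← mul_assoc,
        ENNReal.mul_div_cancel hlampos.ne' hlamt]
    have hBF : B ≤ ENNReal.ofReal (1-t) * F := by
      have hax : a ≤ |u x| := hx
      calc B = ENNReal.ofReal (1-t) * ENNReal.ofReal ((t*a)^p) * K' := hBdef
        _ ≤ ENNReal.ofReal (1-t) * ENNReal.ofReal ((t*|u x|)^p) * K' := by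
            have h5 : (t*a)^p ≤ (t*|u x|)^p :=
              Real.rpow_le_rpow (by positivity) (by nlinarith) hp0.le
            exact mul_le_mul_left (mul_le_mul_right (ENNReal.ofReal_le_ofReal h5) _) _
        _ = ENNReal.ofReal (1-t) * F := by rw [hFdef, mul_assoc]
    have h2 : F ≤ ENNReal.ofReal (lam ^ p) * volume (Prod.mk x ⁻¹' A)
        + ENNReal.ofReal (1-t) * F := by
      calc F ≤ ENNReal.ofReal (lam ^ p) * (volume (Prod.mk x ⁻¹' A) + C) := by
            rw [h1]; exact mul_le_mul_right (hsl x hx) _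
        _ = ENNReal.ofReal (lam ^ p) * volume (Prod.mk x ⁻¹' A)
            + ENNReal.ofReal (lam ^ p) * C := by rw [mul_add]
        _ ≤ ENNReal.ofReal (lam ^ p) * volume (Prod.mk x ⁻¹' A)
            + ENNReal.ofReal (1-t) * F := add_le_add_right (hlamC.trans hBF) _
    have hid : ENNReal.ofReal t * F + ENNReal.ofReal (1-t) * F = F := by
      rw [← add_mul, ← ENNReal.ofReal_add ht0.le (by linarith)]
      norm_num
    have h3 : ENNReal.ofReal t * F + ENNReal.ofReal (1-t) * F
        ≤ ENNReal.ofReal (lam ^ p) * volume (Prod.mk x ⁻¹' A) + ENNReal.ofReal (1-t) * F := by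
      rw [hid]; exact h2
    exact (WithTop.add_le_add_iff_right (ENNReal.mul_ne_top ENNReal.ofReal_ne_top hFt)).mp h3
  have hAint : (volume : Measure ((EuclideanSpace ℝ (Fin N)) × (EuclideanSpace ℝ (Fin N)))) A
      = ∫⁻ x, volume (Prod.mk x ⁻¹' A) := by
    rw [Measure.volume_eq_prod, Measure.prod_apply hAmeas]
  have hmeasl : Measurable fun x => volume (Prod.mk x ⁻¹' A) :=
    measurable_measure_prodMk_left hAmeas
  have heq1 : ∫⁻ x in G, ENNReal.ofReal t * (ENNReal.ofReal ((t*|u x|)^p) * K')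
      = (ENNReal.ofReal t * (ENNReal.ofReal (t^p) * K')) * Ln := by
    have hpt : ∀ x, ENNReal.ofReal t * (ENNReal.ofReal ((t*|u x|)^p) * K')
        = (ENNReal.ofReal t * (ENNReal.ofReal (t^p) * K')) * f x := by
      intro x
      rw [Real.mul_rpow ht0.le (abs_nonneg _), ENNReal.ofReal_mul (by positivity)]
      ring
    rw [lintegral_congr hpt, lintegral_const_mul _ hfmeas]
  refine ⟨lam, mem_Ioi.mpr hlam0, ?_⟩
  calc ENNReal.ofReal c = ENNReal.ofReal t * ENNReal.ofReal (t^p) * D := hceq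
    _ = 2 * ((ENNReal.ofReal t * (ENNReal.ofReal (t^p) * K')) * Ln) := by
        rw [hDdef]; ring
    _ = 2 * ∫⁻ x in G, ENNReal.ofReal t * (ENNReal.ofReal ((t*|u x|)^p) * K') := by
        rw [heq1]
    _ ≤ 2 * ∫⁻ x in G, ENNReal.ofReal (lam^p) * volume (Prod.mk x ⁻¹' A) := by
        apply mul_le_mul_right
        exact setLIntegral_mono (hmeasl.const_mul _) hmain
    _ = 2 * (ENNReal.ofReal (lam^p) * ∫⁻ x in G, volume (Prod.mk x ⁻¹' A)) := by
        rw [lintegral_const_mul _ hmeasl]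
    _ ≤ 2 * (ENNReal.ofReal (lam^p) * ∫⁻ x, volume (Prod.mk x ⁻¹' A)) := by
        gcongr
        exact Measure.restrict_le_self
    _ = ENNReal.ofReal (lam^p) * (2 * volume A) := by rw [← hAint]; ring
    _ ≤ ENNReal.ofReal (lam^p) * volume E := mul_le_mul_right hEbound _

theorem stmt8 (N : ℕ) (hN : 1 ≤ N) (p : ℝ) (hp : 1 ≤ p)
    (u : EuclideanSpace ℝ (Fin N) → ℝ) (hu : Measurable u)
    (hint : Integrable (fun x => |u x| ^ p)) :
    ENNReal.ofReal ((2 * (volume (ball (0 : EuclideanSpace ℝ (Fin N)) 1)).toReal) ^ (1 / p) *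
        (∫ x, |u x| ^ p) ^ (1 / p))
      ≤ ⨆ lam ∈ Set.Ioi (0 : ℝ),
          (ENNReal.ofReal (lam ^ p) *
            volume {q : EuclideanSpace ℝ (Fin N) × EuclideanSpace ℝ (Fin N) |
              q.1 ≠ q.2 ∧ lam * dist q.1 q.2 ^ ((N : ℝ) / p) ≤ |u q.1 - u q.2|}) ^ (1 / p) := by
  have hp0 : 0 < p := lt_of_lt_of_le one_pos hp
  set K := (volume (ball (0 : EuclideanSpace ℝ (Fin N)) 1)).toReal with hKdef
  have hK0 : 0 < K :=
    ENNReal.toReal_pos (measure_ball_pos _ _ one_pos).ne' measure_ball_lt_top.ne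
  have hI0 : 0 ≤ ∫ x, |u x| ^ p := integral_nonneg fun x => Real.rpow_nonneg (abs_nonneg _) _
  have hofI : ENNReal.ofReal (∫ x, |u x| ^ p) = ∫⁻ x, ENNReal.ofReal (|u x| ^ p) :=
    MeasureTheory.ofReal_integral_eq_lintegral_ofReal hint
      (Eventually.of_forall fun x => Real.rpow_nonneg (abs_nonneg _) _)
  set T := 2 * K * ∫ x, |u x| ^ p with hTdef
  have hLHS : (2 * K) ^ (1/p) * (∫ x, |u x| ^ p) ^ (1/p) = T ^ (1/p) :=
    (Real.mul_rpow (by positivity) hI0).symm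
  rw [hLHS]
  have hofT : ENNReal.ofReal T
      = 2 * volume (ball (0 : EuclideanSpace ℝ (Fin N)) 1) * ∫⁻ x, ENNReal.ofReal (|u x| ^ p) := by
    rw [hTdef, ENNReal.ofReal_mul (by positivity), ENNReal.ofReal_mul (by norm_num), hofI,
      hKdef, ENNReal.ofReal_toReal measure_ball_lt_top.ne, ENNReal.ofReal_ofNat]
  rcases eq_or_lt_of_le (mul_nonneg (by positivity : (0:ℝ) ≤ 2*K) hI0) with h0 | hT0
  · have hT : T = 0 := by rw [hTdef, ← h0]
    rw [hT, Real.zero_rpow (by positivity : (1:ℝ)/p ≠ 0)]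
    simp
  · rw [← hTdef] at hT0
    have hkey : ∀ c : ℝ, 0 ≤ c → c < T → ENNReal.ofReal (c ^ (1/p))
        ≤ ⨆ lam ∈ Set.Ioi (0 : ℝ),
          (ENNReal.ofReal (lam ^ p) *
            volume {q : EuclideanSpace ℝ (Fin N) × EuclideanSpace ℝ (Fin N) |
              q.1 ≠ q.2 ∧ lam * dist q.1 q.2 ^ ((N : ℝ) / p) ≤ |u q.1 - u q.2|}) ^ (1 / p) := by
      intro c hc0 hcT
      obtain ⟨lam, hlam, hle⟩ := bvy_key N hN p hp u hu hint c
        (by rw [← hofT]; exact (ENNReal.ofReal_lt_ofReal_iff hT0).mpr hcT)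
      calc ENNReal.ofReal (c ^ (1/p)) = (ENNReal.ofReal c) ^ ((1:ℝ)/p) :=
            (ENNReal.ofReal_rpow_of_nonneg hc0 (by positivity)).symm
        _ ≤ (ENNReal.ofReal (lam ^ p) *
            volume {q : EuclideanSpace ℝ (Fin N) × EuclideanSpace ℝ (Fin N) |
              q.1 ≠ q.2 ∧ lam * dist q.1 q.2 ^ ((N : ℝ) / p) ≤ |u q.1 - u q.2|}) ^ ((1:ℝ) / p) :=
            ENNReal.rpow_le_rpow hle (by positivity)
        _ ≤ _ := le_iSup₂_of_le lam hlam le_rfl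
    have hseq : Tendsto (fun k : ℕ => ENNReal.ofReal ((T * (1 - 1/((k:ℝ)+1))) ^ (1/p)))
        atTop (nhds (ENNReal.ofReal (T ^ (1/p)))) := by
      have h1 : Tendsto (fun k : ℕ => 1/((k:ℝ)+1)) atTop (nhds 0) :=
        tendsto_one_div_add_atTop_nhds_zero_nat
      have h2 : Tendsto (fun k : ℕ => T * (1 - 1/((k:ℝ)+1))) atTop (nhds (T * (1 - 0))) :=
        (tendsto_const_nhds.sub h1).const_mul T
      rw [sub_zero, mul_one] at h2
      exact (ENNReal.continuous_ofReal.tendsto _).comp (h2.rpow_const (Or.inl hT0.ne'))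
    refine le_of_tendsto' hseq fun k => hkey _ ?_ ?_
    · have hk1 : 1/((k:ℝ)+1) ≤ 1 := by
        rw [div_le_one (by positivity)]; linarith [Nat.cast_nonneg (α := ℝ) k]
      have : (0:ℝ) ≤ 1 - 1/((k:ℝ)+1) := by linarith
      positivity
    · have hk0 : 0 < 1/((k:ℝ)+1) := by positivity
      nlinarith
end

section
/- Let u ∈ L^p(ℝ^N), 1 ≤ p < ∞, and let E_λ = {(x,y) : x ≠ y, |u(x)-u(y)| ≥ λ|x-y|^{N/p}}. Then limsup_{λ→0⁺} λ^p |E_λ| ≤ 2κ_N ‖u‖_{L^p}^p. -/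
open MeasureTheory Metric Set Filter
open scoped ENNReal NNReal

section aux

variable {N : ℕ} {p : ℝ}

local notation "E" => EuclideanSpace ℝ (Fin N)

-- volume of one-sided slice set
lemma slice_meas (hp : 1 ≤ p) {g : E → ℝ} (hg : Measurable g) (c : ℝ) :
    MeasurableSet {q : E × E | c * dist q.1 q.2 ^ ((N : ℝ) / p) ≤ |g q.1|} := by
  apply measurableSet_le
  · exact (continuous_const.mul ((continuous_fst.dist continuous_snd).rpow_const
      (fun q => Or.inr (div_nonneg (Nat.cast_nonneg N) (by linarith))))).measurable
  · exact (hg.comp measurable_fst).abs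

lemma slice_vol (hN : 1 ≤ N) (hp : 1 ≤ p) (g : E → ℝ) (hg : Measurable g)
    {c : ℝ} (hc : 0 < c) :
    volume {q : E × E | c * dist q.1 q.2 ^ ((N : ℝ) / p) ≤ |g q.1|}
      = ENNReal.ofReal (c ^ p) ⁻¹ * volume (ball (0 : E) 1)
        * ∫⁻ x, ENNReal.ofReal (|g x| ^ p) := by
  have hp0 : (0:ℝ) < p := lt_of_lt_of_le one_pos hp
  have hNp : (0:ℝ) < (N : ℝ) / p := div_pos (by exact_mod_cast hN) hp0
  have hsec : ∀ x : E, (Prod.mk x ⁻¹' {q : E × E | c * dist q.1 q.2 ^ ((N : ℝ) / p) ≤ |g q.1|})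
      = closedBall x ((|g x| / c) ^ (p / (N : ℝ))) := by
    intro x
    ext y
    simp only [mem_preimage, mem_setOf_eq, mem_closedBall, dist_comm y x]
    rw [mul_comm, ← le_div_iff₀ hc,
      show p / (N : ℝ) = ((N : ℝ) / p)⁻¹ by rw [inv_div]]
    exact (Real.le_rpow_inv_iff_of_pos dist_nonneg
      (div_nonneg (abs_nonneg _) hc.le) hNp).symm
  have hcalc : ∀ x : E, volume (closedBall x ((|g x| / c) ^ (p / (N : ℝ))))
      = ENNReal.ofReal (c ^ p) ⁻¹ * volume (ball (0 : E) 1)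
        * ENNReal.ofReal (|g x| ^ p) := by
    intro x
    have hdn : (0:ℝ) ≤ |g x| / c := div_nonneg (abs_nonneg _) hc.le
    rw [Measure.addHaar_closedBall _ x (Real.rpow_nonneg hdn _)]
    have h1 : ((|g x| / c) ^ (p / (N : ℝ))) ^ Module.finrank ℝ (EuclideanSpace ℝ (Fin N))
        = |g x| ^ p / c ^ p := by
      rw [finrank_euclideanSpace_fin, ← Real.rpow_natCast ((|g x| / c) ^ (p / (N : ℝ))) N,
        ← Real.rpow_mul hdn, div_mul_cancel₀ _
          (show ((N:ℝ)) ≠ 0 from Nat.cast_ne_zero.mpr (by omega)),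
        Real.div_rpow (abs_nonneg _) hc.le]
    rw [h1, div_eq_mul_inv, ENNReal.ofReal_mul (Real.rpow_nonneg (abs_nonneg _) p)]
    ring
  rw [Measure.volume_eq_prod _ _, Measure.prod_apply (slice_meas hp hg c)]
  simp_rw [hsec, hcalc]
  have hmg : Measurable fun x : E => ENNReal.ofReal (|g x| ^ p) :=
    (((continuous_id.rpow_const (fun _ => Or.inr hp0.le)).measurable).comp
      hg.abs).ennreal_ofReal
  rw [lintegral_const_mul _ hmg]

lemma slice_vol' (hN : 1 ≤ N) (hp : 1 ≤ p) (g : E → ℝ) (hg : Measurable g)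
    {c : ℝ} (hc : 0 < c) :
    volume {q : E × E | c * dist q.1 q.2 ^ ((N : ℝ) / p) ≤ |g q.2|}
      = ENNReal.ofReal (c ^ p) ⁻¹ * volume (ball (0 : E) 1)
        * ∫⁻ x, ENNReal.ofReal (|g x| ^ p) := by
  have hT := slice_meas (N := N) hp hg c
  have hs : {q : E × E | c * dist q.1 q.2 ^ ((N : ℝ) / p) ≤ |g q.2|}
      = Prod.swap ⁻¹' {q : E × E | c * dist q.1 q.2 ^ ((N : ℝ) / p) ≤ |g q.1|} := by
    ext q
    simp only [mem_preimage, mem_setOf_eq, Prod.fst_swap, Prod.snd_swap, dist_comm q.2 q.1]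
  rw [hs, Measure.volume_eq_prod _ _,
    (Measure.measurePreserving_swap (μ := (volume : Measure E))
      (ν := volume)).measure_preimage hT.nullMeasurableSet,
    ← Measure.volume_eq_prod _ _, slice_vol hN hp g hg hc]

end aux

theorem stmt17 (N : ℕ) (hN : 1 ≤ N) (p : ℝ) (hp : 1 ≤ p)
    (u : EuclideanSpace ℝ (Fin N) → ℝ) (hu : Measurable u)
    (hint : Integrable (fun x => |u x| ^ p)) :
    Filter.limsup (fun lam : ℝ => ENNReal.ofReal (lam ^ p) *
        volume {q : EuclideanSpace ℝ (Fin N) × EuclideanSpace ℝ (Fin N) |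
          q.1 ≠ q.2 ∧ lam * dist q.1 q.2 ^ ((N : ℝ) / p) ≤ |u q.1 - u q.2|})
      (nhdsWithin 0 (Set.Ioi 0))
      ≤ ENNReal.ofReal (2 * (volume (ball (0 : EuclideanSpace ℝ (Fin N)) 1)).toReal *
          ∫ x, |u x| ^ p) := by
  have hp0 : (0:ℝ) < p := lt_of_lt_of_le one_pos hp
  set K : ℝ≥0∞ := volume (ball (0 : EuclideanSpace ℝ (Fin N)) 1) with hK
  have hKfin : K ≠ ⊤ := measure_ball_lt_top.ne
  set Iu : ℝ≥0∞ := ∫⁻ x, ENNReal.ofReal (|u x| ^ p) with hIu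
  have hIu_eq : ENNReal.ofReal (∫ x, |u x| ^ p) = Iu :=
    MeasureTheory.ofReal_integral_eq_lintegral_ofReal hint
      (Filter.Eventually.of_forall fun x => Real.rpow_nonneg (abs_nonneg _) p)
  have hIufin : Iu ≠ ⊤ := by rw [← hIu_eq]; exact ENNReal.ofReal_ne_top
  have hRHS : ENNReal.ofReal (2 * K.toReal * ∫ x, |u x| ^ p) = 2 * K * Iu := by
    rw [ENNReal.ofReal_mul (by positivity), ENNReal.ofReal_mul (by norm_num),
      hIu_eq, ENNReal.ofReal_ofNat, ENNReal.ofReal_toReal hKfin]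
  rw [hRHS]
  have hfin2 : 2 * K * Iu ≠ ⊤ :=
    ENNReal.mul_ne_top (ENNReal.mul_ne_top (by norm_num) hKfin) hIufin
  apply ENNReal.le_of_forall_pos_le_add
  intro ε hε _
  set ε3 : ℝ≥0∞ := (ε : ℝ≥0∞) / 3 with hε3def
  have hε3pos : 0 < ε3 := by
    refine ENNReal.div_pos ?_ (by norm_num)
    exact_mod_cast hε.ne'
  -- choose δ
  obtain ⟨δ, hδ0, hδ1, hδbound⟩ :
      ∃ δ : ℝ, 0 < δ ∧ δ < 1 ∧
        ENNReal.ofReal (((1 - δ) ^ p)⁻¹) * (2 * K * Iu) ≤ 2 * K * Iu + ε3 := by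
    have htend : Filter.Tendsto
        (fun δ : ℝ => ENNReal.ofReal (((1 - δ) ^ p)⁻¹) * (2 * K * Iu))
        (nhdsWithin 0 (Set.Ioi 0)) (nhds (2 * K * Iu)) := by
      have h1 : Filter.Tendsto (fun δ : ℝ => ENNReal.ofReal (((1 - δ) ^ p)⁻¹))
          (nhdsWithin 0 (Set.Ioi 0)) (nhds 1) := by
        have hc : ContinuousAt (fun δ : ℝ => (1 - δ) ^ p) 0 := by
          apply ContinuousAt.rpow_const (by fun_prop)
          norm_num
        have hcinv : ContinuousAt (fun δ : ℝ => ((1 - δ) ^ p)⁻¹) 0 := by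
          apply hc.inv₀
          norm_num [Real.one_rpow]
        have hb := (ENNReal.continuous_ofReal.continuousAt.comp hcinv).tendsto
        have hb' := hb.mono_left (nhdsWithin_le_nhds (s := Set.Ioi (0:ℝ)))
        simpa [Real.one_rpow, Function.comp_def] using hb'
      simpa [one_mul] using ENNReal.Tendsto.mul_const h1 (Or.inl one_ne_zero)
    have hlt : 2 * K * Iu < 2 * K * Iu + ε3 := ENNReal.lt_add_right hfin2 hε3pos.ne'
    have hev1 : ∀ᶠ δ : ℝ in nhdsWithin 0 (Set.Ioi 0), δ < 1 :=
      (eventually_lt_nhds (by norm_num : (0:ℝ) < 1)).filter_mono nhdsWithin_le_nhds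
    have hev2 : ∀ᶠ δ : ℝ in nhdsWithin 0 (Set.Ioi 0), δ ∈ Set.Ioi (0:ℝ) :=
      eventually_mem_nhdsWithin
    obtain ⟨δ, h1', h2', h3'⟩ := ((htend.eventually_le_const hlt).and (hev2.and hev1)).exists
    exact ⟨δ, h2', h3', h1'⟩
  have h1δ : (0:ℝ) < 1 - δ := by linarith
  -- choose R
  obtain ⟨R, hRbound⟩ :
      ∃ R : ℕ, ENNReal.ofReal (((δ / 2) ^ p)⁻¹) * 2 * K *
        (∫⁻ x in (closedBall (0 : EuclideanSpace ℝ (Fin N)) (R : ℝ))ᶜ,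
          ENNReal.ofReal (|u x| ^ p)) ≤ ε3 := by
    set ρ : Measure (EuclideanSpace ℝ (Fin N)) :=
      volume.withDensity (fun x => ENNReal.ofReal (|u x| ^ p)) with hρ
    have happ : ∀ R : ℕ, ρ ((closedBall (0 : EuclideanSpace ℝ (Fin N)) (R : ℝ))ᶜ)
        = ∫⁻ x in (closedBall (0 : EuclideanSpace ℝ (Fin N)) (R : ℝ))ᶜ,
          ENNReal.ofReal (|u x| ^ p) :=
      fun R => withDensity_apply _ measurableSet_closedBall.compl
    have hmono : Antitone fun R : ℕ =>
        (closedBall (0 : EuclideanSpace ℝ (Fin N)) (R : ℝ))ᶜ := by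
      intro m n hmn
      exact compl_subset_compl.mpr (closedBall_subset_closedBall (by exact_mod_cast hmn))
    have hint0 : (⋂ n : ℕ, (closedBall (0 : EuclideanSpace ℝ (Fin N)) (n : ℝ))ᶜ) = ∅ := by
      ext x
      simp only [Set.mem_iInter, Set.mem_compl_iff, mem_closedBall, Set.mem_empty_iff_false,
        iff_false, not_forall, not_not]
      exact exists_nat_ge (dist x 0)
    have hρfin : ρ Set.univ ≠ ⊤ := by
      rw [hρ, withDensity_apply _ MeasurableSet.univ, Measure.restrict_univ]
      exact hIufin
    have htends : Filter.Tendsto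
        (fun R : ℕ => ρ ((closedBall (0 : EuclideanSpace ℝ (Fin N)) (R : ℝ))ᶜ))
        Filter.atTop (nhds 0) := by
      have := tendsto_measure_iInter_atTop (μ := ρ)
        (fun n => measurableSet_closedBall.compl.nullMeasurableSet) hmono
        ⟨0, ne_top_of_le_ne_top hρfin (measure_mono (Set.subset_univ _))⟩
      rw [hint0] at this
      simpa [Function.comp_def] using this
    have hCfin : ENNReal.ofReal (((δ / 2) ^ p)⁻¹) * 2 * K ≠ ⊤ :=
      ENNReal.mul_ne_top (ENNReal.mul_ne_top ENNReal.ofReal_ne_top (by norm_num)) hKfin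
    have htends2 : Filter.Tendsto
        (fun R : ℕ => ENNReal.ofReal (((δ / 2) ^ p)⁻¹) * 2 * K *
          ρ ((closedBall (0 : EuclideanSpace ℝ (Fin N)) (R : ℝ))ᶜ))
        Filter.atTop (nhds 0) := by
      simpa using ENNReal.Tendsto.const_mul htends (Or.inr hCfin)
    obtain ⟨R, hR⟩ := (htends2.eventually_le_const hε3pos).exists
    exact ⟨R, by rw [← happ R]; exact hR⟩
  set B : Set (EuclideanSpace ℝ (Fin N)) := closedBall 0 (R : ℝ) with hB
  set w : EuclideanSpace ℝ (Fin N) → ℝ := B.indicator u with hw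
  set v : EuclideanSpace ℝ (Fin N) → ℝ := Bᶜ.indicator u with hv
  have hwm : Measurable w := hu.indicator measurableSet_closedBall
  have hvm : Measurable v := hu.indicator measurableSet_closedBall.compl
  have huwv : ∀ x, u x = w x + v x := fun x =>
    (congrFun (B.indicator_self_add_compl u) x).symm
  have habs : ∀ x, |w x| ≤ |u x| := by
    intro x
    by_cases hx : x ∈ B
    · simp [hw, Set.indicator_of_mem hx]
    · simp [hw, Set.indicator_of_notMem hx, abs_nonneg]
  have hJw : (∫⁻ x, ENNReal.ofReal (|w x| ^ p)) ≤ Iu := by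
    rw [hIu]
    apply lintegral_mono
    intro x
    exact ENNReal.ofReal_le_ofReal (Real.rpow_le_rpow (abs_nonneg _) (habs x) hp0.le)
  have hJv : (∫⁻ x, ENNReal.ofReal (|v x| ^ p))
      = ∫⁻ x in Bᶜ, ENNReal.ofReal (|u x| ^ p) := by
    rw [← lintegral_indicator measurableSet_closedBall.compl]
    congr 1
    ext x
    by_cases hx : x ∈ Bᶜ
    · simp [hv, Set.indicator_of_mem hx, Set.indicator_of_mem (show x ∈ (closedBall (0 : EuclideanSpace ℝ (Fin N)) (R : ℝ))ᶜ from hx)]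
    · simp [hv, Set.indicator_of_notMem hx, Set.indicator_of_notMem (show x ∉ (closedBall (0 : EuclideanSpace ℝ (Fin N)) (R : ℝ))ᶜ from hx), Real.zero_rpow hp0.ne']
  have hwzero : ∀ x, x ∉ B → w x = 0 := fun x hx => Set.indicator_of_notMem hx u
  have key : ∀ lam : ℝ, 0 < lam →
      ENNReal.ofReal (lam ^ p) *
        volume {q : EuclideanSpace ℝ (Fin N) × EuclideanSpace ℝ (Fin N) |
          q.1 ≠ q.2 ∧ lam * dist q.1 q.2 ^ ((N : ℝ) / p) ≤ |u q.1 - u q.2|}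
        ≤ ENNReal.ofReal (lam ^ p) * (volume B * volume B)
          + ENNReal.ofReal (((1 - δ) ^ p)⁻¹) *
              (2 * K * ∫⁻ x, ENNReal.ofReal (|w x| ^ p))
          + ENNReal.ofReal (((δ / 2) ^ p)⁻¹) * 2 * K *
              (∫⁻ x, ENNReal.ofReal (|v x| ^ p)) := by
    intro lam hlam
    have hc1 : 0 < (1 - δ) * lam := mul_pos h1δ hlam
    have hc2 : 0 < (δ / 2) * lam := mul_pos (by linarith) hlam
    have hsub : {q : EuclideanSpace ℝ (Fin N) × EuclideanSpace ℝ (Fin N) |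
          q.1 ≠ q.2 ∧ lam * dist q.1 q.2 ^ ((N : ℝ) / p) ≤ |u q.1 - u q.2|}
        ⊆ (B ×ˢ B)
          ∪ {q : EuclideanSpace ℝ (Fin N) × EuclideanSpace ℝ (Fin N) |
              ((1 - δ) * lam) * dist q.1 q.2 ^ ((N : ℝ) / p) ≤ |w q.1|}
          ∪ {q : EuclideanSpace ℝ (Fin N) × EuclideanSpace ℝ (Fin N) |
              ((1 - δ) * lam) * dist q.1 q.2 ^ ((N : ℝ) / p) ≤ |w q.2|}
          ∪ {q : EuclideanSpace ℝ (Fin N) × EuclideanSpace ℝ (Fin N) |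
              ((δ / 2) * lam) * dist q.1 q.2 ^ ((N : ℝ) / p) ≤ |v q.1|}
          ∪ {q : EuclideanSpace ℝ (Fin N) × EuclideanSpace ℝ (Fin N) |
              ((δ / 2) * lam) * dist q.1 q.2 ^ ((N : ℝ) / p) ≤ |v q.2|} := by
      rintro ⟨x, y⟩ ⟨hne, hq⟩
      set d : ℝ := dist x y ^ ((N : ℝ) / p) with hd
      by_cases hxB : (x, y) ∈ B ×ˢ B
      · exact Or.inl (Or.inl (Or.inl (Or.inl hxB)))
      by_cases h2 : ((1 - δ) * lam) * d ≤ |w x|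
      · exact Or.inl (Or.inl (Or.inl (Or.inr h2)))
      by_cases h3 : ((1 - δ) * lam) * d ≤ |w y|
      · exact Or.inl (Or.inl (Or.inr h3))
      by_cases h4 : ((δ / 2) * lam) * d ≤ |v x|
      · exact Or.inl (Or.inr h4)
      by_cases h5 : ((δ / 2) * lam) * d ≤ |v y|
      · exact Or.inr h5
      exfalso
      push_neg at h2 h3 h4 h5
      have hsplit : |u x - u y| ≤ |w x - w y| + |v x - v y| := by
        rw [huwv x, huwv y, add_sub_add_comm]
        exact abs_add_le _ _
      have hw_small : |w x - w y| < ((1 - δ) * lam) * d := by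
        rcases not_and_or.mp ((Set.mem_prod).not.mp hxB) with hx | hy
        · rw [hwzero x hx, zero_sub, abs_neg]; exact h3
        · rw [hwzero y hy, sub_zero]; exact h2
      have hv_small : |v x - v y| < δ * lam * d := by
        calc |v x - v y| ≤ |v x| + |v y| := abs_sub _ _
          _ < ((δ / 2) * lam) * d + ((δ / 2) * lam) * d := add_lt_add h4 h5
          _ = δ * lam * d := by ring
      have hcontra : |u x - u y| < lam * d := by
        calc |u x - u y| ≤ |w x - w y| + |v x - v y| := hsplit
          _ < ((1 - δ) * lam) * d + δ * lam * d := add_lt_add hw_small hv_small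
          _ = lam * d := by ring
      exact absurd hq (not_le.mpr hcontra)
    have hprod : volume (B ×ˢ B) = volume B * volume B := by
      rw [Measure.volume_eq_prod _ _, Measure.prod_prod]
    have e1 : ENNReal.ofReal (lam ^ p) * ENNReal.ofReal ((((1 - δ) * lam) ^ p)⁻¹)
        = ENNReal.ofReal (((1 - δ) ^ p)⁻¹) := by
      rw [← ENNReal.ofReal_mul (Real.rpow_nonneg hlam.le p)]
      congr 1
      rw [Real.mul_rpow h1δ.le hlam.le, mul_inv]
      have h0 : lam ^ p ≠ 0 := (Real.rpow_pos_of_pos hlam p).ne'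
      field_simp
    have e2 : ENNReal.ofReal (lam ^ p) * ENNReal.ofReal ((((δ / 2) * lam) ^ p)⁻¹)
        = ENNReal.ofReal (((δ / 2) ^ p)⁻¹) := by
      rw [← ENNReal.ofReal_mul (Real.rpow_nonneg hlam.le p)]
      congr 1
      rw [Real.mul_rpow (by linarith) hlam.le, mul_inv]
      have h0 : lam ^ p ≠ 0 := (Real.rpow_pos_of_pos hlam p).ne'
      field_simp
    calc ENNReal.ofReal (lam ^ p) *
        volume {q : EuclideanSpace ℝ (Fin N) × EuclideanSpace ℝ (Fin N) |
          q.1 ≠ q.2 ∧ lam * dist q.1 q.2 ^ ((N : ℝ) / p) ≤ |u q.1 - u q.2|}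
        ≤ ENNReal.ofReal (lam ^ p) * (volume (B ×ˢ B)
            + volume {q : EuclideanSpace ℝ (Fin N) × EuclideanSpace ℝ (Fin N) |
                ((1 - δ) * lam) * dist q.1 q.2 ^ ((N : ℝ) / p) ≤ |w q.1|}
            + volume {q : EuclideanSpace ℝ (Fin N) × EuclideanSpace ℝ (Fin N) |
                ((1 - δ) * lam) * dist q.1 q.2 ^ ((N : ℝ) / p) ≤ |w q.2|}
            + volume {q : EuclideanSpace ℝ (Fin N) × EuclideanSpace ℝ (Fin N) |
                ((δ / 2) * lam) * dist q.1 q.2 ^ ((N : ℝ) / p) ≤ |v q.1|}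
            + volume {q : EuclideanSpace ℝ (Fin N) × EuclideanSpace ℝ (Fin N) |
                ((δ / 2) * lam) * dist q.1 q.2 ^ ((N : ℝ) / p) ≤ |v q.2|}) := by
          gcongr
          exact (measure_mono hsub).trans
            ((measure_union_le _ _).trans (add_le_add_left ((measure_union_le _ _).trans
              (add_le_add_left ((measure_union_le _ _).trans (add_le_add_left
                (measure_union_le _ _) _)) _)) _))
      _ = ENNReal.ofReal (lam ^ p) * (volume B * volume B)
          + (ENNReal.ofReal (lam ^ p) * ENNReal.ofReal ((((1 - δ) * lam) ^ p)⁻¹)) *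
              (2 * K * ∫⁻ x, ENNReal.ofReal (|w x| ^ p))
          + (ENNReal.ofReal (lam ^ p) * ENNReal.ofReal ((((δ / 2) * lam) ^ p)⁻¹)) * 2 * K *
              (∫⁻ x, ENNReal.ofReal (|v x| ^ p)) := by
          rw [hprod, slice_vol hN hp w hwm hc1, slice_vol' hN hp w hwm hc1,
            slice_vol hN hp v hvm hc2, slice_vol' hN hp v hvm hc2]
          ring
      _ = _ := by rw [e1, e2]
  have hev0 : Filter.Tendsto (fun lam : ℝ => ENNReal.ofReal (lam ^ p) * (volume B * volume B))
      (nhdsWithin 0 (Set.Ioi 0)) (nhds 0) := by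
    have hBfin : volume B * volume B ≠ ⊤ :=
      ENNReal.mul_ne_top measure_closedBall_lt_top.ne measure_closedBall_lt_top.ne
    have h0 : Filter.Tendsto (fun lam : ℝ => ENNReal.ofReal (lam ^ p))
        (nhdsWithin 0 (Set.Ioi 0)) (nhds 0) := by
      have hc : ContinuousAt (fun lam : ℝ => lam ^ p) 0 :=
        Real.continuousAt_rpow_const 0 p (Or.inr hp0.le)
      have := (ENNReal.continuous_ofReal.continuousAt.comp hc).tendsto.mono_left
        (nhdsWithin_le_nhds (s := Set.Ioi (0 : ℝ)))
      simpa [Real.zero_rpow hp0.ne', Function.comp_def] using this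
    simpa using ENNReal.Tendsto.mul_const h0 (Or.inr hBfin)
  have hev : ∀ᶠ lam : ℝ in nhdsWithin 0 (Set.Ioi 0),
      ENNReal.ofReal (lam ^ p) *
        volume {q : EuclideanSpace ℝ (Fin N) × EuclideanSpace ℝ (Fin N) |
          q.1 ≠ q.2 ∧ lam * dist q.1 q.2 ^ ((N : ℝ) / p) ≤ |u q.1 - u q.2|}
        ≤ ε3 + (2 * K * Iu + ε3) + ε3 := by
    filter_upwards [eventually_mem_nhdsWithin, hev0.eventually_le_const hε3pos]
      with lam hlam hsmall
    refine (key lam hlam).trans (add_le_add (add_le_add hsmall ?_) ?_)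
    · refine le_trans ?_ hδbound
      gcongr
    · rw [hJv]
      exact hRbound
  have heps : ε3 + (2 * K * Iu + ε3) + ε3 = 2 * K * Iu + ε := by
    calc ε3 + (2 * K * Iu + ε3) + ε3 = 2 * K * Iu + (ε3 + ε3 + ε3) := by ring
      _ = 2 * K * Iu + ε := by rw [hε3def, ENNReal.add_thirds]
  exact heps ▸ Filter.limsup_le_of_le (h := hev)
end

section
/- Let u ∈ L^p(ℝ^N), 1 ≤ p < ∞, and let E_λ = {(x,y) : x ≠ y, |u(x)-u(y)| ≥ λ|x-y|^{N/p}}. Then liminf_{λ→0⁺} λ^p |E_λ| ≥ 2κ_N ‖u‖_{L^p}^p. -/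
open MeasureTheory Metric Set Filter
open Topology ENNReal


lemma aux_markov {α : Type*} [MeasurableSpace α] (μ : Measure α) {u : α → ℝ}
    (hu : Measurable u) {p t : ℝ} (hp : 0 < p) (ht : 0 < t) :
    μ {y | t < |u y|} ≤ (∫⁻ x, ENNReal.ofReal (|u x| ^ p) ∂μ) / ENNReal.ofReal (t ^ p) := by
  have htp : 0 < t ^ p := Real.rpow_pos_of_pos ht p
  rw [ENNReal.le_div_iff_mul_le (Or.inl (by simp [htp])) (Or.inl ENNReal.ofReal_ne_top)]
  rw [mul_comm]
  calc ENNReal.ofReal (t ^ p) * μ {y | t < |u y|}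
      ≤ ENNReal.ofReal (t ^ p) * μ {y | ENNReal.ofReal (t ^ p) ≤ ENNReal.ofReal (|u y| ^ p)} := by
        gcongr _ * ?_
        refine measure_mono fun y hy => ?_
        exact ENNReal.ofReal_le_ofReal
          (Real.rpow_le_rpow ht.le (le_of_lt hy) hp.le)
    _ ≤ ∫⁻ x, ENNReal.ofReal (|u x| ^ p) ∂μ :=
        mul_meas_ge_le_lintegral₀ ((hu.abs.pow_const p).ennreal_ofReal).aemeasurable _

lemma aux_key (N : ℕ) (hN : 1 ≤ N) (p : ℝ) (hp : 1 ≤ p)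
    (u : EuclideanSpace ℝ (Fin N) → ℝ) (hu : Measurable u)
    {ε lam : ℝ} (hε0 : 0 < ε) (hε1 : ε < 1) (hl : 0 < lam) :
    2 * ∫⁻ x, (ENNReal.ofReal ((1 - ε) ^ p * |u x| ^ p) *
        volume (ball (0 : EuclideanSpace ℝ (Fin N)) 1)
      - ENNReal.ofReal (lam ^ p) *
        ((∫⁻ y, ENNReal.ofReal (|u y| ^ p)) / ENNReal.ofReal ((ε * |u x|) ^ p)))
    ≤ ENNReal.ofReal (lam ^ p) *
      volume {q : EuclideanSpace ℝ (Fin N) × EuclideanSpace ℝ (Fin N) |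
        q.1 ≠ q.2 ∧ lam * dist q.1 q.2 ^ ((N : ℝ) / p) ≤ |u q.1 - u q.2|} := by
  have hp0 : (0 : ℝ) < p := lt_of_lt_of_le one_pos hp
  have hN0 : (0 : ℝ) < (N : ℝ) := by exact_mod_cast hN
  have h1ε : (0 : ℝ) < 1 - ε := by linarith
  set E := {q : EuclideanSpace ℝ (Fin N) × EuclideanSpace ℝ (Fin N) |
        q.1 ≠ q.2 ∧ lam * dist q.1 q.2 ^ ((N : ℝ) / p) ≤ |u q.1 - u q.2|} with hE
  set κ := volume (ball (0 : EuclideanSpace ℝ (Fin N)) 1) with hκ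
  set K := ∫⁻ y, ENNReal.ofReal (|u y| ^ p) with hK
  -- radius function
  set R : EuclideanSpace ℝ (Fin N) → ℝ := fun x => ((1 - ε) * |u x| / lam) ^ (p / (N : ℝ)) with hR
  set P : Set (EuclideanSpace ℝ (Fin N) × EuclideanSpace ℝ (Fin N)) :=
    {q | u q.1 ≠ 0 ∧ |u q.2| ≤ ε * |u q.1| ∧ dist q.1 q.2 ≤ R q.1} with hP
  have hRmeas : Measurable R := ((hu.abs.const_mul _).div_const _).pow_const _
  have hPmeas : MeasurableSet P := by
    apply MeasurableSet.inter
    · exact (hu.comp measurable_fst) (measurableSet_singleton 0).compl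
    apply MeasurableSet.inter
    · exact measurableSet_le (hu.comp measurable_snd).abs
        ((hu.comp measurable_fst).abs.const_mul ε)
    · exact measurableSet_le (measurable_fst.dist measurable_snd)
        (hRmeas.comp measurable_fst)
  -- key geometric fact: membership in P implies membership in E
  have hsub : ∀ x y : EuclideanSpace ℝ (Fin N), (x, y) ∈ P → (x, y) ∈ E := by
    rintro x y ⟨h0, hsm, hd⟩
    have hux : 0 < |u x| := abs_pos.2 h0
    have hs : 0 < (1 - ε) * |u x| / lam := by positivity
    have hne : x ≠ y := by
      rintro rfl
      nlinarith [hsm]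
    refine ⟨hne, ?_⟩
    have hdist : (0 : ℝ) ≤ dist x y := dist_nonneg
    have h1 : dist x y ^ ((N : ℝ) / p) ≤ (R x) ^ ((N : ℝ) / p) :=
      Real.rpow_le_rpow hdist hd (by positivity)
    have h2 : (R x) ^ ((N : ℝ) / p) = (1 - ε) * |u x| / lam := by
      rw [hR]; dsimp only
      rw [← Real.rpow_mul hs.le]
      rw [show p / (N : ℝ) * ((N : ℝ) / p) = 1 by field_simp, Real.rpow_one]
    calc lam * dist x y ^ ((N : ℝ) / p) ≤ lam * ((1 - ε) * |u x| / lam) := by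
          rw [← h2]; exact mul_le_mul_of_nonneg_left h1 hl.le
      _ = (1 - ε) * |u x| := by field_simp
      _ ≤ |u x| - |u y| := by nlinarith
      _ ≤ |u x - u y| := abs_sub_abs_le_abs_sub _ _
  have hswap : Prod.swap ⁻¹' P ⊆ E := by
    rintro ⟨x, y⟩ hq
    have := hsub y x hq
    obtain ⟨hne, hle⟩ := this
    exact ⟨hne.symm, by rwa [dist_comm, abs_sub_comm] at hle⟩
  have hdisj : Disjoint P (Prod.swap ⁻¹' P) := by
    rw [Set.disjoint_left]
    rintro ⟨x, y⟩ ⟨h0, hsm, -⟩ ⟨h0', hsm', -⟩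
    simp only [Prod.swap_prod_mk] at h0' hsm'
    dsimp only at h0 hsm
    have hux : 0 < |u x| := abs_pos.2 h0
    have h2 := hsm'.trans (mul_le_mul_of_nonneg_left hsm hε0.le)
    nlinarith [h2, mul_pos (mul_pos (by linarith : (0:ℝ) < 1 - ε)
      (by linarith : (0:ℝ) < 1 + ε)) hux]
  have hPsubE : P ⊆ E := fun q hq => hsub q.1 q.2 (by simpa using hq)
  have hswapmeas : MeasurableSet (Prod.swap ⁻¹' P) := measurable_swap hPmeas
  have hvol_swap : volume (Prod.swap ⁻¹' P) = volume P := by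
    rw [MeasureTheory.Measure.volume_eq_prod]
    exact MeasureTheory.Measure.measurePreserving_swap.measure_preimage hPmeas.nullMeasurableSet
  have h2P : 2 * volume P ≤ volume E := by
    have h1 : volume (P ∪ Prod.swap ⁻¹' P) ≤ volume E :=
      measure_mono (Set.union_subset hPsubE hswap)
    rw [measure_union hdisj hswapmeas, hvol_swap] at h1
    rw [two_mul]; exact h1
  -- slice formula
  have hslice : volume P = ∫⁻ x, volume (Prod.mk x ⁻¹' P) := by
    rw [MeasureTheory.Measure.volume_eq_prod, Measure.prod_apply hPmeas]
  -- pointwise bound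
  have hpt : ∀ x : EuclideanSpace ℝ (Fin N),
      ENNReal.ofReal ((1 - ε) ^ p * |u x| ^ p) * κ
        - ENNReal.ofReal (lam ^ p) * (K / ENNReal.ofReal ((ε * |u x|) ^ p))
      ≤ ENNReal.ofReal (lam ^ p) * volume (Prod.mk x ⁻¹' P) := by
    intro x
    by_cases h0 : u x = 0
    · simp [h0, Real.zero_rpow hp0.ne']
    · have hux : 0 < |u x| := abs_pos.2 h0
      have hs : 0 < (1 - ε) * |u x| / lam := by positivity
      have ht : 0 < ε * |u x| := by positivity
      have hRx : 0 ≤ R x := Real.rpow_nonneg hs.le _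
      -- the slice contains a closed ball minus a bad set
      have hsl : closedBall x (R x) \ {y | ε * |u x| < |u y|} ⊆ Prod.mk x ⁻¹' P := by
        rintro y ⟨hy1, hy2⟩
        exact ⟨h0, not_lt.1 hy2, by rwa [dist_comm, ← mem_closedBall]⟩
      have hball : volume (closedBall x (R x)) =
          ENNReal.ofReal (((1 - ε) * |u x| / lam) ^ p) * κ := by
        rw [Measure.addHaar_closedBall volume x hRx, finrank_euclideanSpace_fin]
        congr 2
        rw [hR]; dsimp only
        rw [← Real.rpow_natCast (((1 - ε) * |u x| / lam) ^ (p / (N : ℝ))) N,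
          ← Real.rpow_mul hs.le]
        congr 1
        field_simp
      have hbad : volume {y | ε * |u x| < |u y|} ≤ K / ENNReal.ofReal ((ε * |u x|) ^ p) :=
        aux_markov volume hu hp0 ht
      have hlow : ENNReal.ofReal (((1 - ε) * |u x| / lam) ^ p) * κ
          - K / ENNReal.ofReal ((ε * |u x|) ^ p) ≤ volume (Prod.mk x ⁻¹' P) := by
        refine le_trans ?_ (measure_mono hsl)
        rw [← hball]
        have hcb : volume (closedBall x (R x)) ≤
            volume (closedBall x (R x) \ {y | ε * |u x| < |u y|})
              + volume {y | ε * |u x| < |u y|} :=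
          (measure_mono (Set.subset_diff_union _ _)).trans (measure_union_le _ _)
        exact tsub_le_iff_right.2 (hcb.trans (by gcongr))
      have heq : ENNReal.ofReal (lam ^ p) * ENNReal.ofReal (((1 - ε) * |u x| / lam) ^ p)
          = ENNReal.ofReal ((1 - ε) ^ p * |u x| ^ p) := by
        rw [← ENNReal.ofReal_mul (by positivity)]
        congr 1
        rw [← Real.mul_rpow hl.le hs.le, ← Real.mul_rpow h1ε.le (abs_nonneg _)]
        congr 1
        field_simp
      calc ENNReal.ofReal ((1 - ε) ^ p * |u x| ^ p) * κ
            - ENNReal.ofReal (lam ^ p) * (K / ENNReal.ofReal ((ε * |u x|) ^ p))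
          = ENNReal.ofReal (lam ^ p) * (ENNReal.ofReal (((1 - ε) * |u x| / lam) ^ p) * κ)
            - ENNReal.ofReal (lam ^ p) * (K / ENNReal.ofReal ((ε * |u x|) ^ p)) := by
            rw [← heq, mul_assoc]
        _ ≤ ENNReal.ofReal (lam ^ p) * (ENNReal.ofReal (((1 - ε) * |u x| / lam) ^ p) * κ
            - K / ENNReal.ofReal ((ε * |u x|) ^ p)) := by
            rw [tsub_le_iff_right]
            calc ENNReal.ofReal (lam ^ p) * (ENNReal.ofReal (((1 - ε) * |u x| / lam) ^ p) * κ)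
                ≤ ENNReal.ofReal (lam ^ p) * ((ENNReal.ofReal (((1 - ε) * |u x| / lam) ^ p) * κ
                  - K / ENNReal.ofReal ((ε * |u x|) ^ p)) + K / ENNReal.ofReal ((ε * |u x|) ^ p)) := by
                  gcongr
                  exact le_tsub_add
              _ = _ := by rw [mul_add]
        _ ≤ ENNReal.ofReal (lam ^ p) * volume (Prod.mk x ⁻¹' P) := by gcongr
  -- put everything together
  calc 2 * ∫⁻ x, (ENNReal.ofReal ((1 - ε) ^ p * |u x| ^ p) * κ
        - ENNReal.ofReal (lam ^ p) * (K / ENNReal.ofReal ((ε * |u x|) ^ p)))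
      ≤ 2 * ∫⁻ x, ENNReal.ofReal (lam ^ p) * volume (Prod.mk x ⁻¹' P) := by
        gcongr with x
        exact hpt x
    _ = 2 * (ENNReal.ofReal (lam ^ p) * ∫⁻ x, volume (Prod.mk x ⁻¹' P)) := by
        rw [lintegral_const_mul' _ _ ENNReal.ofReal_ne_top]
    _ = ENNReal.ofReal (lam ^ p) * (2 * volume P) := by
        rw [hslice]; ring
    _ ≤ ENNReal.ofReal (lam ^ p) * volume E := by gcongr


theorem stmt18 (N : ℕ) (hN : 1 ≤ N) (p : ℝ) (hp : 1 ≤ p)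
    (u : EuclideanSpace ℝ (Fin N) → ℝ) (hu : Measurable u)
    (hint : Integrable (fun x => |u x| ^ p)) :
    Filter.liminf (fun lam : ℝ => ENNReal.ofReal (lam ^ p) *
        volume {q : EuclideanSpace ℝ (Fin N) × EuclideanSpace ℝ (Fin N) |
          q.1 ≠ q.2 ∧ lam * dist q.1 q.2 ^ ((N : ℝ) / p) ≤ |u q.1 - u q.2|})
      (nhdsWithin 0 (Set.Ioi 0))
      ≥ ENNReal.ofReal (2 * (volume (ball (0 : EuclideanSpace ℝ (Fin N)) 1)).toReal *
          ∫ x, |u x| ^ p) := by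
  have hp0 : (0 : ℝ) < p := lt_of_lt_of_le one_pos hp
  set κ := volume (ball (0 : EuclideanSpace ℝ (Fin N)) 1) with hκ
  set K := ∫⁻ y, ENNReal.ofReal (|u y| ^ p) with hKdef
  have hInn : 0 ≤ᵐ[volume] fun x => |u x| ^ p :=
    Filter.Eventually.of_forall fun x => Real.rpow_nonneg (abs_nonneg _) _
  have hKI : ENNReal.ofReal (∫ x, |u x| ^ p) = K :=
    ofReal_integral_eq_lintegral_ofReal hint hInn
  have hKfin : K ≠ ⊤ := by rw [← hKI]; exact ENNReal.ofReal_ne_top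
  have hκfin : κ ≠ ⊤ := measure_ball_lt_top.ne
  have hInt_nonneg : 0 ≤ ∫ x, |u x| ^ p := integral_nonneg fun x => Real.rpow_nonneg (abs_nonneg _) _
  have hRHS : ENNReal.ofReal (2 * κ.toReal * ∫ x, |u x| ^ p) = 2 * κ * K := by
    rw [ENNReal.ofReal_mul (by positivity), ENNReal.ofReal_mul (by norm_num : (0:ℝ) ≤ 2),
      ENNReal.ofReal_toReal hκfin, hKI, ENNReal.ofReal_ofNat]
  rw [ge_iff_le, hRHS]
  refine le_of_forall_lt_imp_le_of_dense fun b hb => ?_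
  -- choose ε
  have htend : Tendsto (fun ε : ℝ => ENNReal.ofReal ((1 - ε) ^ p) * (2 * κ * K))
      (𝓝[>] (0:ℝ)) (𝓝 (2 * κ * K)) := by
    have h1 : Tendsto (fun ε : ℝ => ENNReal.ofReal ((1 - ε) ^ p)) (𝓝 (0:ℝ)) (𝓝 1) := by
      have hc : ContinuousAt (fun y : ℝ => y ^ p) 1 :=
        Real.continuousAt_rpow_const 1 p (Or.inl one_ne_zero)
      have h2 : Tendsto (fun ε : ℝ => (1 - ε) ^ p) (𝓝 (0:ℝ)) (𝓝 1) := by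
        have h2a : Tendsto (fun ε : ℝ => 1 - ε) (𝓝 (0:ℝ)) (𝓝 1) := by
          simpa [Pi.sub_def] using (continuous_const.sub continuous_id).tendsto (0:ℝ)
        have := hc.tendsto.comp h2a
        simpa [Function.comp_def] using this
      have := (ENNReal.continuous_ofReal.tendsto 1).comp h2
      simpa [Function.comp_def] using this
    have h5 : Tendsto (fun ε : ℝ => ENNReal.ofReal ((1 - ε) ^ p) * (2 * κ * K))
        (𝓝[>] (0:ℝ)) (𝓝 (1 * (2 * κ * K))) :=
      ENNReal.Tendsto.mul_const (h1.mono_left nhdsWithin_le_nhds) (Or.inl one_ne_zero)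
    simpa using h5
  have hev : ∀ᶠ ε in 𝓝[>] (0:ℝ),
      (b < ENNReal.ofReal ((1 - ε) ^ p) * (2 * κ * K) ∧ ε < 1) ∧ 0 < ε := by
    refine Filter.Eventually.and (Filter.Eventually.and ?_ ?_) ?_
    · exact htend.eventually_const_lt hb
    · exact (eventually_lt_nhds zero_lt_one).filter_mono nhdsWithin_le_nhds
    · exact eventually_mem_nhdsWithin.mono fun x hx => hx
  obtain ⟨ε, ⟨hbε, hε1⟩, hε0⟩ := hev.exists
  -- monotone sequence of functions
  set A : EuclideanSpace ℝ (Fin N) → ℝ≥0∞ :=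
    fun x => ENNReal.ofReal ((1 - ε) ^ p * |u x| ^ p) * κ with hA
  set B : EuclideanSpace ℝ (Fin N) → ℝ≥0∞ :=
    fun x => K / ENNReal.ofReal ((ε * |u x|) ^ p) with hB
  set f : ℕ → EuclideanSpace ℝ (Fin N) → ℝ≥0∞ :=
    fun n x => A x - ENNReal.ofReal ((1 / (n + 1) : ℝ) ^ p) * B x with hf
  have hAmeas : Measurable A := ((hu.abs.pow_const p).const_mul ((1 - ε) ^ p)).ennreal_ofReal.mul_const κ
  have hBmeas : Measurable B :=
    Measurable.const_div ((hu.abs.const_mul ε).pow_const p).ennreal_ofReal K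
  have hfmeas : ∀ n, Measurable (f n) := fun n => hAmeas.sub (hBmeas.const_mul _)
  have hmono : Monotone f := by
    intro m n hmn x
    dsimp only [hf]
    refine tsub_le_tsub_left ?_ _
    gcongr
  have hsup : ∀ x, ⨆ n, f n x = A x := by
    intro x
    by_cases h0 : u x = 0
    · have hA0 : A x = 0 := by
        rw [hA]; dsimp only; rw [h0]; simp [Real.zero_rpow hp0.ne']
      simp [hf, hA0, zero_tsub]
    · have hux : 0 < |u x| := abs_pos.2 h0
      have hBfin : B x ≠ ⊤ := by
        rw [hB]; dsimp only
        have hpos : (0:ℝ) < (ε * |u x|) ^ p := Real.rpow_pos_of_pos (by positivity) p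
        exact (ENNReal.div_lt_top hKfin (ENNReal.ofReal_pos.2 hpos).ne').ne
      have h1 : Tendsto (fun n : ℕ => ENNReal.ofReal ((1 / (n + 1) : ℝ) ^ p)) atTop (𝓝 0) := by
        have h2 : Tendsto (fun n : ℕ => (1 / (n + 1) : ℝ)) atTop (𝓝 0) :=
          tendsto_one_div_add_atTop_nhds_zero_nat
        have hc : ContinuousAt (fun y : ℝ => y ^ p) 0 :=
          Real.continuousAt_rpow_const 0 p (Or.inr hp0.le)
        have := (ENNReal.continuous_ofReal.tendsto _).comp (hc.tendsto.comp h2)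
        simpa [Real.zero_rpow hp0.ne', Function.comp_def] using this
      have h3 : Tendsto (fun n : ℕ => ENNReal.ofReal ((1 / (n + 1) : ℝ) ^ p) * B x)
          atTop (𝓝 0) := by
        simpa using ENNReal.Tendsto.mul_const h1 (Or.inr hBfin)
      have h4 := ENNReal.Tendsto.sub
        (tendsto_const_nhds : Tendsto (fun _ : ℕ => A x) atTop (𝓝 (A x))) h3
        (Or.inr (by simp))
      rw [tsub_zero] at h4
      exact tendsto_nhds_unique (tendsto_atTop_iSup fun m n h => hmono h x) h4
  have hMCT : ⨆ n, ∫⁻ x, f n x = ENNReal.ofReal ((1 - ε) ^ p) * κ * K := by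
    rw [← lintegral_iSup hfmeas hmono]
    have heq : ∀ x, ⨆ n, f n x =
        ENNReal.ofReal ((1 - ε) ^ p) * (ENNReal.ofReal (|u x| ^ p) * κ) := by
      intro x
      rw [hsup x, hA]; dsimp only
      rw [ENNReal.ofReal_mul (Real.rpow_nonneg (by linarith) p), mul_assoc]
    calc ∫⁻ x, ⨆ n, f n x
        = ∫⁻ x, ENNReal.ofReal ((1 - ε) ^ p) * (ENNReal.ofReal (|u x| ^ p) * κ) := by
          exact lintegral_congr heq
      _ = ENNReal.ofReal ((1 - ε) ^ p) * ∫⁻ x, ENNReal.ofReal (|u x| ^ p) * κ :=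
          lintegral_const_mul' _ _ ENNReal.ofReal_ne_top
      _ = ENNReal.ofReal ((1 - ε) ^ p) * (K * κ) := by
          rw [lintegral_mul_const' κ _ hκfin, ← hKdef]
      _ = ENNReal.ofReal ((1 - ε) ^ p) * κ * K := by ring
  have hb2 : b < ⨆ n, 2 * ∫⁻ x, f n x := by
    rw [← ENNReal.mul_iSup, hMCT]
    refine lt_of_lt_of_le hbε (le_of_eq ?_)
    ring
  obtain ⟨n₀, hn₀⟩ := lt_iSup_iff.mp hb2
  have hev2 : ∀ᶠ lam in 𝓝[>] (0:ℝ), b ≤ ENNReal.ofReal (lam ^ p) *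
      volume {q : EuclideanSpace ℝ (Fin N) × EuclideanSpace ℝ (Fin N) |
        q.1 ≠ q.2 ∧ lam * dist q.1 q.2 ^ ((N : ℝ) / p) ≤ |u q.1 - u q.2|} := by
    have hpos : (0:ℝ) < 1 / (n₀ + 1) := by positivity
    filter_upwards [Ioo_mem_nhdsGT_of_mem (Set.left_mem_Ico.2 hpos)] with lam hlam
    have hl0 : (0:ℝ) < lam := hlam.1
    have key := aux_key N hN p hp u hu hε0 hε1 hl0
    refine le_trans hn₀.le (le_trans ?_ key)
    gcongr 2 * ?_
    refine lintegral_mono fun x => ?_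
    dsimp only [hf]
    refine tsub_le_tsub_left ?_ _
    gcongr
    exact hlam.2.le
  exact le_liminf_of_le (by isBoundedDefault) hev2
end
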